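/- arXiv:1210.6608 — 10 statements merged into one kernel-verified Lean document; each statement's English description precedes it below -/
import Mathlib

section
/- Let A be a unital C*-algebra and k ≥ 1. Then Gen_k(A)_sa ⊆ Lg_k(A)_sa; that is, if a tuple (a_1,…,a_k) of self-adjoint elements generates A as a C*-algebra, then the element a_1² + ⋯ + a_k² is invertible in A. -/
/-- The entries of the tuple `a` generate `A` as a C*-algebra: the smallest closed
`*`-subalgebra of `A` containing them is `A` itself. -/
def Generates {A : Type*} [NonUnitalCStarAlgebra A] {k : ℕ} (a : Fin k → A) : Prop :=
  (NonUnitalStarAlgebra.adjoin ℂ (Set.range a)).topologicalClosure = ⊤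

/-- If `x` is self-adjoint and `x ^ 2 ≤ s` with `s` nonneg, then `x` lies in the closure of the
left ideal generated by `s`. -/
lemma mem_closure_span_of_sq_le {A : Type*} [CStarAlgebra A] [PartialOrder A]
    [StarOrderedRing A] {x s : A}
    (hx : IsSelfAdjoint x) (hs : 0 ≤ s) (hle : x ^ 2 ≤ s) :
    x ∈ (Submodule.span A {s}).topologicalClosure := by
  have hssa : IsSelfAdjoint s := .of_nonneg hs
  rw [← SetLike.mem_coe, Submodule.topologicalClosure_coe, Metric.mem_closure_iff]
  intro δ hδ
  have hε0 : (0 : ℝ) < δ ^ 2 / 2 := by positivity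
  set ε : ℝ := δ ^ 2 / 2 with hε
  have hspec : ∀ t ∈ spectrum ℝ s, 0 ≤ t := fun t ht => spectrum_nonneg_of_nonneg hs ht
  have hne : ∀ t ∈ spectrum ℝ s, ε + t ≠ 0 := fun t ht => by
    have := hspec t ht; positivity
  have hg : ContinuousOn (fun t : ℝ => (ε + t)⁻¹) (spectrum ℝ s) :=
    ContinuousOn.inv₀ (by fun_prop) hne
  have hf : ContinuousOn (fun t : ℝ => 1 - (ε + t)⁻¹ * t) (spectrum ℝ s) :=
    continuousOn_const.sub (hg.mul continuousOn_id)
  -- cfc computations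
  have hbs : cfc (fun t : ℝ => (ε + t)⁻¹ * t) s
      = cfc (fun t : ℝ => (ε + t)⁻¹) s * s := by
    have := cfc_mul (fun t : ℝ => (ε + t)⁻¹) (fun t : ℝ => t) s hg continuousOn_id
    rwa [cfc_id' ℝ s] at this
  have hc : cfc (fun t : ℝ => 1 - (ε + t)⁻¹ * t) s
      = 1 - cfc (fun t : ℝ => (ε + t)⁻¹) s * s := by
    have := cfc_sub (fun _ : ℝ => (1 : ℝ)) (fun t : ℝ => (ε + t)⁻¹ * t) s
      continuousOn_const (hg.mul continuousOn_id)
    rwa [hbs, cfc_const 1 s, map_one] at this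
  have e2 : cfc (fun t : ℝ => (1 - (ε + t)⁻¹ * t) * t) s
      = cfc (fun t : ℝ => 1 - (ε + t)⁻¹ * t) s * s := by
    have := cfc_mul (fun t : ℝ => 1 - (ε + t)⁻¹ * t) (fun t : ℝ => t) s hf continuousOn_id
    rwa [cfc_id' ℝ s] at this
  have e1 : cfc (fun t : ℝ => (1 - (ε + t)⁻¹ * t) * t * (1 - (ε + t)⁻¹ * t)) s
      = cfc (fun t : ℝ => 1 - (ε + t)⁻¹ * t) s * s * cfc (fun t : ℝ => 1 - (ε + t)⁻¹ * t) s := by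
    have := cfc_mul (fun t : ℝ => (1 - (ε + t)⁻¹ * t) * t) (fun t : ℝ => 1 - (ε + t)⁻¹ * t) s
      (hf.mul continuousOn_id) hf
    rwa [e2] at this
  have normbound : ‖cfc (fun t : ℝ => (1 - (ε + t)⁻¹ * t) * t * (1 - (ε + t)⁻¹ * t)) s‖ ≤ ε := by
    refine norm_cfc_le hε0.le fun t ht => ?_
    have ht0 := hspec t ht
    have htne : ε + t ≠ 0 := hne t ht
    have hval : (1 - (ε + t)⁻¹ * t) * t * (1 - (ε + t)⁻¹ * t) = ε ^ 2 * t / (ε + t) ^ 2 := by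
      field_simp
      ring
    rw [hval, Real.norm_eq_abs, abs_of_nonneg (by positivity),
      div_le_iff₀ (by positivity)]
    nlinarith [sq_nonneg (ε - t), mul_nonneg ht0 ht0, hε0.le, mul_nonneg hε0.le ht0]
  have csa : IsSelfAdjoint (cfc (fun t : ℝ => 1 - (ε + t)⁻¹ * t) s) := cfc_predicate _ s
  set c : A := cfc (fun t : ℝ => 1 - (ε + t)⁻¹ * t) s with hcdef
  refine ⟨x * cfc (fun t : ℝ => (ε + t)⁻¹) s * s,
    Submodule.smul_mem _ _ (Submodule.mem_span_singleton_self s), ?_⟩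
  rw [dist_eq_norm]
  have hxc : x - x * cfc (fun t : ℝ => (ε + t)⁻¹) s * s = x * c := by
    rw [hc]; noncomm_ring
  rw [hxc]
  have key : ‖x * c‖ * ‖x * c‖ = ‖c * (x * x) * c‖ := by
    rw [← CStarRing.norm_star_mul_self (x := x * c)]
    congr 1
    rw [star_mul, csa.star_eq, hx.star_eq]
    noncomm_ring
  have hnn : (0 : A) ≤ c * (x * x) * c := by
    have : c * (x * x) * c = star (x * c) * (x * c) := by
      rw [star_mul, csa.star_eq, hx.star_eq]; noncomm_ring
    rw [this]
    exact star_mul_self_nonneg _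
  have hconj : c * (x * x) * c ≤ c * s * c := by
    have := star_left_conjugate_le_conjugate hle c
    rwa [csa.star_eq, sq] at this
  have hnorm1 : ‖c * (x * x) * c‖ ≤ ‖c * s * c‖ :=
    CStarAlgebra.norm_le_norm_of_nonneg_of_le hnn hconj
  have hfin : ‖x * c‖ * ‖x * c‖ ≤ ε := by
    rw [key]
    exact hnorm1.trans (e1 ▸ normbound)
  have : ‖x * c‖ < δ := by
    nlinarith [norm_nonneg (x * c)]
  exact this

/-- If a tuple `(a_1, …, a_k)` of self-adjoint elements generates a unital
C*-algebra `A`, then `a_1² + ⋯ + a_k²` is invertible in `A`;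
that is, `Gen_k(A)_sa ⊆ Lg_k(A)_sa`. -/
theorem isUnit_sum_sq_of_generates {A : Type*} [CStarAlgebra A] {k : ℕ} (hk : 1 ≤ k)
    (a : Fin k → A) (hsa : ∀ i, IsSelfAdjoint (a i)) (hgen : Generates a) :
    IsUnit (∑ i, a i ^ 2) := by
  letI := CStarAlgebra.spectralOrder A
  letI := CStarAlgebra.spectralOrderedRing A
  set s : A := ∑ i, a i ^ 2 with hsdef
  have hsq : ∀ i, (0 : A) ≤ a i ^ 2 := fun i => by
    simpa [sq, (hsa i).star_eq] using star_mul_self_nonneg (a i)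
  have hs : 0 ≤ s := Finset.sum_nonneg fun i _ => hsq i
  have hssa : IsSelfAdjoint s := .of_nonneg hs
  set L : Submodule A A := (Submodule.span A {s}).topologicalClosure with hLdef
  have hmem : ∀ j, a j ∈ L := fun j =>
    mem_closure_span_of_sq_le (hsa j) hs
      (Finset.single_le_sum (fun i _ => hsq i) (Finset.mem_univ j))
  have hmul : ∀ {x y : A}, y ∈ L → x * y ∈ L := fun {x y} hy => by
    simpa [smul_eq_mul] using L.smul_mem x hy
  let N : NonUnitalSubalgebra ℂ A :=
    { carrier := (L : Set A)
      add_mem' := fun hx hy => L.add_mem hx hy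
      zero_mem' := L.zero_mem
      mul_mem' := fun _ hy => hmul hy
      smul_mem' := fun r y hy => by
        have := L.smul_mem (algebraMap ℂ A r) hy
        rwa [algebraMap_smul] at this }
  have hadj' : NonUnitalAlgebra.adjoin ℂ (Set.range a ∪ star (Set.range a)) ≤ N := by
    apply NonUnitalAlgebra.adjoin_le
    rintro z (⟨i, rfl⟩ | hz)
    · exact hmem i
    · rw [Set.mem_star] at hz
      obtain ⟨i, hi⟩ := hz
      have hz' : z = a i := by rw [← star_star z, ← hi, (hsa i).star_eq]
      exact hz' ▸ hmem i
  have hadj : (NonUnitalStarAlgebra.adjoin ℂ (Set.range a) : Set A) ⊆ (L : Set A) :=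
    fun z hz => hadj' hz
  have hone : (1 : A) ∈ L := by
    have h1 : (1 : A) ∈ closure (NonUnitalStarAlgebra.adjoin ℂ (Set.range a) : Set A) := by
      have hg := hgen
      rw [Generates] at hg
      have : (1 : A) ∈ (NonUnitalStarAlgebra.adjoin ℂ (Set.range a)).topologicalClosure := by
        rw [hg]; trivial
      exact this
    have hLc : IsClosed (L : Set A) := (Submodule.span A {s}).isClosed_topologicalClosure
    have := closure_mono hadj h1
    rwa [hLc.closure_eq] at this
  have h2 : (1 : A) ∈ closure ((Submodule.span A {s} : Submodule A A) : Set A) := by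
    rwa [← Submodule.topologicalClosure_coe]
  obtain ⟨y, hy, hdist⟩ := Metric.mem_closure_iff.mp h2 1 one_pos
  obtain ⟨r, rfl⟩ := Submodule.mem_span_singleton.mp hy
  have hlt : ‖1 - r * s‖ < 1 := by rwa [dist_eq_norm, smul_eq_mul] at hdist
  have hunit : IsUnit (r * s) :=
    sub_sub_self 1 (r * s) ▸ (Units.oneSub (1 - r * s) hlt).isUnit
  obtain ⟨u, hu⟩ := hunit
  set t : A := (↑u⁻¹ : A) * r with htdef
  have ht1 : t * s = 1 := by
    rw [htdef, mul_assoc, ← hu]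
    exact u.inv_mul
  have ht2 : s * star t = 1 := by
    have := congrArg star ht1
    rwa [star_mul, hssa.star_eq, star_one] at this
  have ht3 : t = star t := by
    conv_lhs => rw [← mul_one t, ← ht2, ← mul_assoc, ht1, one_mul]
  exact ⟨⟨s, t, by rw [ht3]; exact ht2, ht1⟩, rfl⟩
end

section
/- Let A be a C*-algebra and k ≥ 1. Then Gen_k(A) is a Gδ-subset of A^k, and Gen_k(A)_sa is a Gδ-subset of A^k_sa. -/
/-!
Every element of the `*`-algebra generated by a tuple `a` is a noncommutative `*`-polynomial
in `a`, hence of the form `f a` for a continuous map `f` with `f b` in the `*`-algebra generated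
by `b` for all `b`. So the tuples whose generated `*`-algebra meets a fixed open set `U` form an
open set. If some tuple generates `A`, then `A` is separable, hence second countable, and a tuple
generates `A` iff its `*`-algebra meets every set of a countable basis.
-/

open Set TopologicalSpace

instance FreeSemigroup.instCountable {α : Type*} [Countable α] : Countable (FreeSemigroup α) :=
  have : Countable (WithOne (FreeSemigroup α)) :=
    FreeMonoid.equivWithOneFreeSemigroup.symm.injective.countable
  WithOne.coe_injective.countable

theorem Subsemigroup.countable_closure {M : Type*} [Semigroup M] {s : Set M}
    (hs : s.Countable) : (Subsemigroup.closure s : Set M).Countable := by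
  have := hs.to_subtype
  refine (countable_range (FreeSemigroup.lift ((↑) : s → M))).mono ?_
  rw [← MulHom.coe_srange]
  exact Subsemigroup.closure_le.2 fun x hx => ⟨.of ⟨x, hx⟩, FreeSemigroup.lift_of _ _⟩

namespace NonUnitalStarAlgebra

variable {R A : Type*} [CommSemiring R] [StarRing R] [NonUnitalSemiring A] [StarRing A]
  [Module R A] [IsScalarTower R A A] [SMulCommClass R A A] [StarModule R A] [TopologicalSpace A]

theorem isSeparable_adjoin [TopologicalSpace R] [SeparableSpace R] [ContinuousAdd A]
    [ContinuousSMul R A] {s : Set A} (hs : s.Countable) : IsSeparable (adjoin R s : Set A) := by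
  have hstar : (star s).Countable := image_star (s := s) ▸ hs.image star
  change IsSeparable ((adjoin R s).toSubmodule : Set A)
  rw [adjoin_eq_span]
  exact (Subsemigroup.countable_closure (hs.union hstar)).isSeparable.span

theorem exists_continuous_of_mem_adjoin_range [ContinuousAdd A] [ContinuousMul A]
    [ContinuousConstSMul R A] [ContinuousStar A] {ι : Type*} (a : ι → A) {y : A}
    (hy : y ∈ adjoin R (range a)) :
    ∃ f : (ι → A) → A, Continuous f ∧ f a = y ∧ ∀ b, f b ∈ adjoin R (range b) := by
  induction hy using adjoin_induction with
  | mem x hx =>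
    obtain ⟨i, rfl⟩ := hx
    exact ⟨fun b => b i, continuous_apply i, rfl, fun b => subset_adjoin R _ ⟨i, rfl⟩⟩
  | add x y _ _ ihx ihy =>
    obtain ⟨f, hf, rfl, hfm⟩ := ihx
    obtain ⟨g, hg, rfl, hgm⟩ := ihy
    exact ⟨f + g, hf.add hg, rfl, fun b => add_mem (hfm b) (hgm b)⟩
  | zero => exact ⟨0, continuous_const, rfl, fun _ => zero_mem _⟩
  | mul x y _ _ ihx ihy =>
    obtain ⟨f, hf, rfl, hfm⟩ := ihx
    obtain ⟨g, hg, rfl, hgm⟩ := ihy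
    exact ⟨f * g, hf.mul hg, rfl, fun b => mul_mem (hfm b) (hgm b)⟩
  | smul r x _ ih =>
    obtain ⟨f, hf, rfl, hfm⟩ := ih
    exact ⟨r • f, hf.const_smul r, rfl, fun b => SMulMemClass.smul_mem r (hfm b)⟩
  | star x _ ih =>
    obtain ⟨f, hf, rfl, hfm⟩ := ih
    exact ⟨star f, hf.star, rfl, fun b => star_mem (hfm b)⟩

theorem isOpen_setOf_inter_adjoin_range_nonempty [ContinuousAdd A] [ContinuousMul A]
    [ContinuousConstSMul R A] [ContinuousStar A] {ι : Type*} {U : Set A} (hU : IsOpen U) :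
    IsOpen {a : ι → A | (U ∩ adjoin R (range a)).Nonempty} := by
  refine isOpen_iff_mem_nhds.2 fun a ⟨y, hyU, hy⟩ => ?_
  obtain ⟨f, hf, rfl, hfm⟩ := exists_continuous_of_mem_adjoin_range a hy
  filter_upwards [hf.continuousAt.preimage_mem_nhds (hU.mem_nhds hyU)] with b hb
  exact ⟨f b, hb, hfm b⟩

end NonUnitalStarAlgebra

section Generates

variable {A : Type*} [NonUnitalCStarAlgebra A] {k : ℕ}

theorem generates_iff_dense {a : Fin k → A} :
    Generates a ↔ Dense (NonUnitalStarAlgebra.adjoin ℂ (range a) : Set A) := by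
  rw [Generates, ← SetLike.coe_set_eq, dense_iff_closure_eq]
  rfl

theorem Generates.separableSpace {a : Fin k → A} (ha : Generates a) : SeparableSpace A := by
  rw [← isSeparable_univ_iff, ← (generates_iff_dense.1 ha).closure_eq]
  exact (NonUnitalStarAlgebra.isSeparable_adjoin (finite_range a).countable).closure

theorem setOf_generates_eq_biInter [SecondCountableTopology A] :
    {a : Fin k → A | Generates a} =
      ⋂ U ∈ countableBasis A,
        {a | (U ∩ NonUnitalStarAlgebra.adjoin ℂ (range a)).Nonempty} := by
  ext a
  simp only [mem_ofPred_eq, mem_iInter, generates_iff_dense, (isBasis_countableBasis A).dense_iff]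
  exact forall₂_congr fun U hU =>
    ⟨fun h => h (nonempty_of_mem_countableBasis hU), fun h _ => h⟩

theorem isGδ_setOf_generates : IsGδ {a : Fin k → A | Generates a} := by
  obtain h | ⟨a₀, ha₀⟩ := eq_empty_or_nonempty {a : Fin k → A | Generates a}
  · exact h ▸ .empty
  have := ha₀.separableSpace
  have := UniformSpace.secondCountable_of_separable A
  rw [setOf_generates_eq_biInter]
  exact .biInter (countable_countableBasis A) fun U hU =>
    (NonUnitalStarAlgebra.isOpen_setOf_inter_adjoin_range_nonempty
      (isOpen_of_mem_countableBasis hU)).isGδ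

end Generates

theorem gen_isGdelta_general {A : Type*} [NonUnitalCStarAlgebra A] {k : ℕ} :
    IsGδ {a : Fin k → A | Generates a} ∧
    IsGδ {a : {x : Fin k → A // ∀ i, IsSelfAdjoint (x i)} | Generates a.1} :=
  ⟨isGδ_setOf_generates, isGδ_setOf_generates.preimage continuous_subtype_val⟩

/-- For a C*-algebra `A` and `k ≥ 1`, the set `Gen_k(A)` is a Gδ-subset of `A^k`,
and `Gen_k(A)_sa` is a Gδ-subset of `A^k_sa` (with its subspace topology). -/
theorem gen_isGdelta {A : Type*} [NonUnitalCStarAlgebra A] {k : ℕ} (hk : 1 ≤ k) :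
    IsGδ {a : Fin k → A | Generates a} ∧
    IsGδ {a : {x : Fin k → A // ∀ i, IsSelfAdjoint (x i)} | Generates a.1} :=
  gen_isGdelta_general
end

section
/- Let A be a separable C*-algebra, let k ≥ 1, and let S ⊆ A^k be a closed subset. Assume that for every x ∈ S, every ε > 0, and every z ∈ A there exists y ∈ S such that ‖y − x‖ < ε and dist(z, C*(y)) < ε, where C*(y) is the closed *-subalgebra of A generated by the entries of y. Then Gen_k(A) ∩ S is dense in S; that is, for every x ∈ S and ε > 0 there exists y ∈ S with ‖y − x‖ < ε whose entries generate A as a C*-algebra. -/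
open NonUnitalStarAlgebra in
/-- Every element of the `*`-algebra generated by the entries of a tuple `x` is the value at `x`
of a continuous "noncommutative `*`-polynomial" function, whose value at any tuple `y` lies in the
`*`-algebra generated by the entries of `y`. -/
lemma exists_cont_poly_aux {A : Type*} [NonUnitalCStarAlgebra A] {k : ℕ}
    (x : Fin k → A) (w : A) (hw : w ∈ adjoin ℂ (Set.range x)) :
    ∃ f : (Fin k → A) → A, Continuous f ∧ f x = w ∧
      ∀ y : Fin k → A, f y ∈ adjoin ℂ (Set.range y) := by
  induction hw using adjoin_induction with
  | mem a ha =>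
    obtain ⟨i, rfl⟩ := ha
    exact ⟨fun y => y i, continuous_apply i, rfl,
      fun y => subset_adjoin ℂ _ ⟨i, rfl⟩⟩
  | add a b ha hb iha ihb =>
    obtain ⟨f, hf, hfx, hfm⟩ := iha
    obtain ⟨g, hg, hgx, hgm⟩ := ihb
    exact ⟨fun y => f y + g y, hf.add hg, by dsimp only; rw [hfx, hgx],
      fun y => add_mem (hfm y) (hgm y)⟩
  | zero => exact ⟨fun _ => 0, continuous_const, rfl, fun y => zero_mem _⟩
  | mul a b ha hb iha ihb =>
    obtain ⟨f, hf, hfx, hfm⟩ := iha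
    obtain ⟨g, hg, hgx, hgm⟩ := ihb
    exact ⟨fun y => f y * g y, hf.mul hg, by dsimp only; rw [hfx, hgx],
      fun y => mul_mem (hfm y) (hgm y)⟩
  | smul r a ha iha =>
    obtain ⟨f, hf, hfx, hfm⟩ := iha
    exact ⟨fun y => r • f y, hf.const_smul r, by dsimp only; rw [hfx],
      fun y => SMulMemClass.smul_mem r (hfm y)⟩
  | star a ha iha =>
    obtain ⟨f, hf, hfx, hfm⟩ := iha
    exact ⟨fun y => star (f y), hf.star, by dsimp only; rw [hfx], fun y => star_mem (hfm y)⟩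

open NonUnitalStarAlgebra in
/-- The one-step improvement lemma: from `x₀ ∈ S` we can move less than `δ` to `x₁ ∈ S` with a
radius `δ₁ ≤ δ/2` and a noncommutative `*`-polynomial `f` such that `f y` approximates `z` within
`ε` for every `y` in the closed ball of radius `2δ₁` around `x₁`. -/
lemma step_lemma_aux {A : Type*} [NonUnitalCStarAlgebra A] {k : ℕ}
    (S : Set (Fin k → A))
    (h : ∀ x ∈ S, ∀ ε : ℝ, 0 < ε → ∀ z : A, ∃ y ∈ S, (∀ i, ‖y i - x i‖ < ε) ∧
      ∃ w ∈ (adjoin ℂ (Set.range y)).topologicalClosure, ‖z - w‖ < ε) :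
    ∀ x₀ ∈ S, ∀ δ : ℝ, 0 < δ → ∀ (z : A) (ε : ℝ), 0 < ε →
    ∃ (x₁ : Fin k → A) (δ₁ : ℝ), (x₁ ∈ S ∧ 0 < δ₁) ∧ δ₁ ≤ δ / 2 ∧
      (∀ i, ‖x₁ i - x₀ i‖ < δ) ∧
      ∃ f : (Fin k → A) → A, (∀ y, f y ∈ adjoin ℂ (Set.range y)) ∧
        ∀ y : Fin k → A, (∀ i, ‖y i - x₁ i‖ ≤ 2 * δ₁) → ‖z - f y‖ < ε := by
  intro x₀ hx₀ δ hδ z ε hε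
  obtain ⟨x₁, hx₁S, hclose, w, hw, hzw⟩ := h x₀ hx₀ (min δ (ε / 3)) (by positivity) z
  have hwcl : w ∈ closure (adjoin ℂ (Set.range x₁) : Set A) := hw
  obtain ⟨v, hv, hwv⟩ := Metric.mem_closure_iff.mp hwcl (ε / 3) (by positivity)
  obtain ⟨f, hf, hfx, hfm⟩ := exists_cont_poly_aux x₁ v hv
  obtain ⟨δ', hδ', hf'⟩ := Metric.continuousAt_iff.mp hf.continuousAt (ε / 3) (by positivity)
  refine ⟨x₁, min (δ / 2) (δ' / 3), ⟨hx₁S, by positivity⟩, min_le_left _ _,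
    fun i => (hclose i).trans_le (min_le_left _ _), f, hfm, fun y hy => ?_⟩
  have hdist : dist y x₁ < δ' := by
    have h1 : dist y x₁ ≤ 2 * min (δ / 2) (δ' / 3) := by
      rw [dist_pi_le_iff (by positivity)]
      intro i
      rw [dist_eq_norm]
      exact hy i
    calc dist y x₁ ≤ 2 * min (δ / 2) (δ' / 3) := h1
      _ ≤ 2 * (δ' / 3) := by
          gcongr
          exact min_le_right _ _
      _ < δ' := by linarith
  have hfy : dist (f y) v < ε / 3 := by
    have := hf' hdist
    rwa [hfx] at this
  have h1 : ‖z - w‖ < ε / 3 := hzw.trans_le (min_le_right _ _)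
  have h2 : ‖w - v‖ < ε / 3 := by rw [← dist_eq_norm]; exact hwv
  have h3 : ‖v - f y‖ < ε / 3 := by rw [← dist_eq_norm, dist_comm]; exact hfy
  calc ‖z - f y‖ = ‖(z - w) + (w - v) + (v - f y)‖ := by congr 1; abel
    _ ≤ ‖z - w‖ + ‖w - v‖ + ‖v - f y‖ := norm_add₃_le
    _ < ε := by linarith

/-- Let `A` be a separable C*-algebra, `k ≥ 1`, and `S ⊆ A^k` closed.
If every `x ∈ S` can be perturbed within `S` by less than `ε` so that any prescribed `z ∈ A`
is within `ε` of the generated sub-C*-algebra, then the generating tuples in `S` are dense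
in `S`. -/
theorem building_generators {A : Type*} [NonUnitalCStarAlgebra A]
    [TopologicalSpace.SeparableSpace A] {k : ℕ} (hk : 1 ≤ k)
    (S : Set (Fin k → A)) (hS : IsClosed S)
    (h : ∀ x ∈ S, ∀ ε : ℝ, 0 < ε → ∀ z : A, ∃ y ∈ S, (∀ i, ‖y i - x i‖ < ε) ∧
      ∃ w ∈ (NonUnitalStarAlgebra.adjoin ℂ (Set.range y)).topologicalClosure, ‖z - w‖ < ε) :
    ∀ x ∈ S, ∀ ε : ℝ, 0 < ε → ∃ y ∈ S, (∀ i, ‖y i - x i‖ < ε) ∧ Generates y := by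
  open NonUnitalStarAlgebra in
  have key := step_lemma_aux S h
  intro x hx ε hε
  have : Nonempty A := ⟨0⟩
  set u : ℕ → A := TopologicalSpace.denseSeq A with hu_def
  have hu : DenseRange u := TopologicalSpace.denseRange_denseSeq A
  set zs : ℕ → A := fun n => u (Nat.unpair n).1 with hzs_def
  have key' : ∀ (t : {p : (Fin k → A) × ℝ // p.1 ∈ S ∧ 0 < p.2}) (n : ℕ),
      ∃ t' : {p : (Fin k → A) × ℝ // p.1 ∈ S ∧ 0 < p.2},
      t'.1.2 ≤ t.1.2 / 2 ∧ (∀ i, ‖t'.1.1 i - t.1.1 i‖ < t.1.2) ∧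
      ∃ f : (Fin k → A) → A,
        (∀ y, f y ∈ NonUnitalStarAlgebra.adjoin ℂ (Set.range y)) ∧
        ∀ y, (∀ i, ‖y i - t'.1.1 i‖ ≤ 2 * t'.1.2) → ‖zs n - f y‖ < 1 / (n + 1 : ℝ) := by
    rintro ⟨⟨x₀, δ⟩, hx₀, hδ⟩ n
    obtain ⟨x₁, δ₁, hinv, hhalf, hcl, f, hfm, hf⟩ :=
      key x₀ hx₀ δ hδ (zs n) (1 / (n + 1 : ℝ)) (by positivity)
    exact ⟨⟨(x₁, δ₁), hinv⟩, hhalf, hcl, f, hfm, hf⟩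
  choose next hnext1 hnext2 F hF1 hF2 using key'
  set seq : ℕ → {p : (Fin k → A) × ℝ // p.1 ∈ S ∧ 0 < p.2} :=
    fun n => Nat.rec (⟨(x, ε / 4), hx, by positivity⟩ :
      {p : (Fin k → A) × ℝ // p.1 ∈ S ∧ 0 < p.2}) (fun n t => next t n) n with hseq_def
  have hseq : ∀ n, seq (n + 1) = next (seq n) n := fun n => rfl
  have hDpos : ∀ n, 0 < (seq n).1.2 := fun n => (seq n).2.2
  have hmemS : ∀ n, (seq n).1.1 ∈ S := fun n => (seq n).2.1
  have hDhalf : ∀ n, (seq (n + 1)).1.2 ≤ (seq n).1.2 / 2 := by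
    intro n; rw [hseq n]; exact hnext1 (seq n) n
  have hXcl : ∀ n i, ‖(seq (n + 1)).1.1 i - (seq n).1.1 i‖ < (seq n).1.2 := by
    intro n; rw [hseq n]; exact hnext2 (seq n) n
  have hD0 : (seq 0).1.2 = ε / 4 := rfl
  have hX0 : (seq 0).1.1 = x := rfl
  have hDgeo : ∀ n, (seq n).1.2 ≤ ε / 4 * (1 / 2) ^ n := by
    intro n
    induction n with
    | zero => simp [hD0]
    | succ n ih =>
      calc (seq (n + 1)).1.2 ≤ (seq n).1.2 / 2 := hDhalf n
        _ ≤ ε / 4 * (1 / 2) ^ n / 2 := by linarith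
        _ = ε / 4 * (1 / 2) ^ (n + 1) := by ring
  have hstep : ∀ n, dist ((seq (n + 1)).1.1) ((seq n).1.1) ≤ (seq n).1.2 := by
    intro n
    rw [dist_pi_le_iff (hDpos n).le]
    intro i
    rw [dist_eq_norm]
    exact (hXcl n i).le
  have htel : ∀ n m, n ≤ m →
      dist ((seq m).1.1) ((seq n).1.1) ≤ 2 * (seq n).1.2 - 2 * (seq m).1.2 := by
    intro n m hnm
    induction m, hnm using Nat.le_induction with
    | base => simp
    | succ m hnm ih =>
      calc dist ((seq (m + 1)).1.1) ((seq n).1.1)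
          ≤ dist ((seq (m + 1)).1.1) ((seq m).1.1) + dist ((seq m).1.1) ((seq n).1.1) :=
            dist_triangle _ _ _
        _ ≤ (seq m).1.2 + (2 * (seq n).1.2 - 2 * (seq m).1.2) := by
            gcongr
            exact hstep m
        _ ≤ 2 * (seq n).1.2 - 2 * (seq (m + 1)).1.2 := by
            have := hDhalf m; linarith
  have hcauchy : CauchySeq (fun n => (seq n).1.1) := by
    apply cauchySeq_of_le_geometric (1 / 2) (ε / 4) (by norm_num)
    intro n
    rw [dist_comm]
    exact (hstep n).trans (hDgeo n)
  obtain ⟨y, hy⟩ := cauchySeq_tendsto_of_complete hcauchy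
  have hlim : ∀ n, dist y ((seq n).1.1) ≤ 2 * (seq n).1.2 := by
    intro n
    have htends : Filter.Tendsto (fun m => dist ((seq m).1.1) ((seq n).1.1))
        Filter.atTop (nhds (dist y ((seq n).1.1))) := hy.dist tendsto_const_nhds
    refine le_of_tendsto htends ?_
    filter_upwards [Filter.eventually_ge_atTop n] with m hm
    have := htel n m hm
    have := hDpos m
    linarith
  have hyS : y ∈ S := hS.mem_of_tendsto hy (Filter.Eventually.of_forall hmemS)
  refine ⟨y, hyS, ?_, ?_⟩
  · intro i
    have h1 : dist (y i) (x i) ≤ dist y x := dist_le_pi_dist y x i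
    have h2 : dist y x ≤ 2 * (ε / 4) := by
      have := hlim 0
      rwa [hX0, hD0] at this
    rw [← dist_eq_norm]
    calc dist (y i) (x i) ≤ 2 * (ε / 4) := h1.trans h2
      _ < ε := by linarith
  · refine top_unique fun z _ => ?_
    show z ∈ closure (NonUnitalStarAlgebra.adjoin ℂ (Set.range y) : Set A)
    rw [Metric.mem_closure_iff]
    intro ε' hε'
    obtain ⟨m, hm⟩ := Metric.denseRange_iff.mp hu z (ε' / 2) (by positivity)
    obtain ⟨j, hj⟩ := exists_nat_one_div_lt (show (0:ℝ) < ε' / 2 by positivity)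
    set n := Nat.pair m j with hn_def
    have hzsn : zs n = u m := by rw [hzs_def]; simp [hn_def, Nat.unpair_pair]
    have hjn : (j : ℝ) ≤ n := by exact_mod_cast Nat.right_le_pair m j
    have hbound : ∀ i, ‖y i - (seq (n + 1)).1.1 i‖ ≤ 2 * (seq (n + 1)).1.2 := by
      intro i
      rw [← dist_eq_norm]
      exact (dist_le_pi_dist y ((seq (n + 1)).1.1) i).trans (hlim (n + 1))
    have hfy := hF2 (seq n) n y (by rw [← hseq n] at *; exact hbound)
    refine ⟨F (seq n) n y, hF1 (seq n) n y, ?_⟩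
    have h1n : (1 : ℝ) / (n + 1) ≤ 1 / (j + 1) := by
      apply one_div_le_one_div_of_le (by positivity)
      linarith
    calc dist z (F (seq n) n y) ≤ dist z (u m) + dist (u m) (F (seq n) n y) :=
          dist_triangle _ _ _
      _ < ε' / 2 + ε' / 2 := by
          gcongr
          rw [dist_eq_norm, ← hzsn]
          exact hfy.trans_le (h1n.trans hj.le)
      _ = ε' := by ring
end

section
/- Let A be a non-unital C*-algebra with minimal unitization Ã, and let k ≥ 1. Then Gen_k(Ã)_sa is dense in Ã^k_sa if and only if both Gen_k(A)_sa is dense in A^k_sa and Lg_k(Ã)_sa is dense in Ã^k_sa. In other words, gr(A) = max{rr(A), gr_sa(A)}, where gr_sa(A) is the least k ≥ 0 with Gen_{k+1}(A)_sa dense in A^{k+1}_sa. -/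
/-!
A self-adjoint tuple `b` in `Ã` generates `Ã` exactly when `h = ∑ bᵢ²` is invertible and the
`A`-parts `(bᵢ).snd` generate `A`. Then `Gen_k(Ã)_sa ⊆ Lg_k(Ã)_sa`, and projecting to `A`
sends `Gen_k(Ã)_sa` into `Gen_k(A)_sa`. Conversely, if `Gen_k(A)_sa` is dense, correcting the
`A`-parts shows that the tuples whose `A`-parts generate are dense in `Ã^k_sa`; as invertibility
of `h` is an open condition, they are dense in `Lg_k(Ã)_sa`, and they lie in `Gen_k(Ã)_sa`.

The criterion is that `1` lies in the closed non-unital `*`-algebra `D` generated by the `bᵢ`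
iff `h` is invertible. If it is, `1 = f h` for a continuous `f` with `f 0 = 0` and `f = 1` on
the spectrum of `h`, so `1 ∈ D`. Conversely, the `z` with `z⋆z ≤ C • h` for some `C : ℝ` form a
left ideal containing every `bᵢ`, hence `D`; its closure contains `1`, so the ideal contains `1`,
and `1 ≤ C • h` makes `h` invertible.
-/

open NonUnitalStarAlgebra

section DominatedLeftIdeal

variable {B : Type*} [CStarAlgebra B] [PartialOrder B] [StarOrderedRing B]

def dominatedLeftIdeal (h : B) : Ideal B where
  carrier := {z | ∃ C : ℝ, star z * z ≤ C • h}
  zero_mem' := ⟨0, by simp⟩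
  add_mem' := by
    rintro z w ⟨C, hz⟩ ⟨D, hw⟩
    refine ⟨2 * (C + D), ?_⟩
    have parallelogram : star (z + w) * (z + w) + star (z - w) * (z - w) =
        (2 : ℝ) • (star z * z + star w * w) := by
      simp only [star_add, star_sub, two_smul]; noncomm_ring
    calc star (z + w) * (z + w) ≤ (2 : ℝ) • (star z * z + star w * w) :=
          parallelogram ▸ le_add_of_nonneg_right (star_mul_self_nonneg _)
      _ ≤ (2 : ℝ) • (C • h + D • h) := by gcongr
      _ = (2 * (C + D)) • h := by rw [← add_smul, smul_smul]
  smul_mem' := by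
    rintro x z ⟨C, hz⟩
    refine ⟨‖x‖ ^ 2 * C, ?_⟩
    calc star (x • z) * (x • z) = star z * (star x * x) * z := by
          simp only [smul_eq_mul, star_mul, mul_assoc]
      _ ≤ star z * algebraMap ℝ B (‖x‖ ^ 2) * z :=
          star_left_conjugate_le_conjugate CStarAlgebra.star_mul_le_algebraMap_norm_sq z
      _ = (‖x‖ ^ 2) • (star z * z) := by
          rw [Algebra.algebraMap_eq_smul_one, mul_smul_comm, mul_one, smul_mul_assoc]
      _ ≤ (‖x‖ ^ 2) • (C • h) := by gcongr
      _ = (‖x‖ ^ 2 * C) • h := smul_smul _ _ _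

lemma isUnit_of_one_mem_dominatedLeftIdeal {h : B} (h1 : 1 ∈ dominatedLeftIdeal h) :
    IsUnit h := by
  obtain ⟨C, hC⟩ := h1
  have hCh : IsUnit (algebraMap ℝ B C * h) := by
    rw [← Algebra.smul_def]
    exact CStarAlgebra.isUnit_of_le 1 (by simpa using hC)
  exact ((Algebra.commute_algebraMap_left C h).isUnit_mul_iff.mp hCh).2

end DominatedLeftIdeal

lemma NonUnitalStarAlgebra.adjoin_subset_of_subset_ideal {R A : Type*} [CommSemiring R]
    [StarRing R] [Semiring A] [StarRing A] [Algebra R A] [StarModule R A] {s : Set A}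
    (hs : ∀ x ∈ s, star x ∈ s) {I : Ideal A} (hsI : s ⊆ I) : (adjoin R s : Set A) ⊆ I := by
  intro x hx
  replace hx : x ∈ (adjoin R s).toNonUnitalSubalgebra := hx
  rw [adjoin_toNonUnitalSubalgebra,
    Set.union_eq_left.mpr fun y hy => star_star y ▸ hs _ hy] at hx
  induction hx using NonUnitalAlgebra.adjoin_induction with
  | mem x hx => exact hsI hx
  | add x y _ _ hx hy => exact I.add_mem hx hy
  | zero => exact I.zero_mem
  | mul x y _ _ _ hy => exact I.mul_mem_left x hy
  | smul r x _ hx => rw [← algebraMap_smul A r x, smul_eq_mul]; exact I.mul_mem_left _ hx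

section UnitalCStarAlgebra

variable {B : Type*} [CStarAlgebra B]

lemma isUnit_sum_sq_of_one_mem_closure_adjoin {ι : Type*} [Fintype ι] {b : ι → B}
    (hb : ∀ i, IsSelfAdjoint (b i))
    (h1 : (1 : B) ∈ (adjoin ℂ (Set.range b)).topologicalClosure) :
    IsUnit (∑ i, b i ^ 2) := by
  let := CStarAlgebra.spectralOrder B
  let := CStarAlgebra.spectralOrderedRing B
  set J := dominatedLeftIdeal (∑ i, b i ^ 2)
  have hbJ : Set.range b ⊆ J := by
    rintro _ ⟨i, rfl⟩
    refine ⟨1, ?_⟩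
    rw [(hb i).star_eq, one_smul, ← sq]
    exact Finset.single_le_sum (fun j _ => (hb j).sq_nonneg) (Finset.mem_univ i)
  have hadj : (adjoin ℂ (Set.range b) : Set B) ⊆ J :=
    adjoin_subset_of_subset_ideal (by rintro _ ⟨i, rfl⟩; exact ⟨i, (hb i).star_eq.symm⟩) hbJ
  have hJ : J.closure = ⊤ := J.closure.eq_top_iff_one.mpr (closure_mono hadj h1)
  refine isUnit_of_one_mem_dominatedLeftIdeal (J.eq_top_iff_one.mp ?_)
  by_contra hJ'
  exact J.closure_ne_top hJ' hJ

lemma NonUnitalStarSubalgebra.one_mem_of_isUnit {S : NonUnitalStarSubalgebra ℂ B}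
    (hS : IsClosed (S : Set B)) {x : B} (hxS : x ∈ S) (hx : IsUnit x) : (1 : B) ∈ S := by
  nontriviality B
  let := CStarAlgebra.spectralOrder B
  let := CStarAlgebra.spectralOrderedRing B
  have hpos : IsStrictlyPositive (star x * x) :=
    (hx.star.mul hx).isStrictlyPositive (star_mul_self_nonneg x)
  obtain ⟨r, hr, hr_le⟩ := (CFC.exists_pos_algebraMap_le_iff hpos.isSelfAdjoint).mpr
    fun t ht => hpos.spectrum_pos ht
  have hspec : ∀ t ∈ spectrum ℝ (star x * x), r ≤ t :=
    (algebraMap_le_iff_le_spectrum hpos.isSelfAdjoint).mp hr_le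
  have hmem : cfcₙ (fun t : ℝ => min 1 (t / r)) (star x * x) ∈ S :=
    haveI : IsClosed (S : Set B) := hS
    cfcₙ_mem _ (mul_mem (star_mem hxS) hxS)
  -- the function vanishes at `0` but is `1` on the spectrum, which stays away from `0`
  have hone : cfcₙ (fun t : ℝ => min 1 (t / r)) (star x * x) = 1 := by
    rw [cfcₙ_eq_cfc, ← cfc_one ℝ (star x * x)]
    refine cfc_congr fun t ht => ?_
    simpa using (one_le_div hr).mpr (hspec t ht)
  exact hone ▸ hmem

end UnitalCStarAlgebra

namespace Unitization

lemma isSelfAdjoint_snd {R A : Type*} [Semiring R] [StarAddMonoid R] [Star A]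
    {z : Unitization R A} (hz : IsSelfAdjoint z) : IsSelfAdjoint z.snd := by
  rw [IsSelfAdjoint, ← snd_star, hz.star_eq]

variable {R A : Type*} [CommSemiring R] [StarRing R] [NonUnitalSemiring A] [StarRing A]
  [Module R A] [StarModule R A] [IsScalarTower R A A] [SMulCommClass R A A]

def sndComap (T : NonUnitalStarSubalgebra R A) : NonUnitalStarSubalgebra R (Unitization R A) where
  carrier := {z | z.snd ∈ T}
  add_mem' {z w} (hz : z.snd ∈ T) (hw : w.snd ∈ T) := by simpa using add_mem hz hw
  zero_mem' := by simp
  mul_mem' {z w} (hz : z.snd ∈ T) (hw : w.snd ∈ T) := by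
    simpa using add_mem (add_mem (SMulMemClass.smul_mem z.fst hw)
      (SMulMemClass.smul_mem w.fst hz)) (mul_mem hz hw)
  smul_mem' r z (hz : z.snd ∈ T) := by simpa using SMulMemClass.smul_mem r hz
  star_mem' {z} (hz : z.snd ∈ T) := by simpa using star_mem hz

end Unitization

section Generates

open Unitization

variable {A : Type*} [NonUnitalCStarAlgebra A] {k : ℕ}

lemma Generates.snd {b : Fin k → Unitization ℂ A} (hb : Generates b) :
    Generates fun i => (b i).snd := by
  set T := (adjoin ℂ (Set.range fun i => (b i).snd)).topologicalClosure
  have hle : (adjoin ℂ (Set.range b)).topologicalClosure ≤ sndComap T := by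
    refine NonUnitalStarSubalgebra.topologicalClosure_minimal _ (adjoin_le ?_)
      ((NonUnitalStarSubalgebra.isClosed_topologicalClosure _).preimage
        Unitization.continuous_snd)
    rintro _ ⟨i, rfl⟩
    exact NonUnitalStarSubalgebra.le_topologicalClosure _ (subset_adjoin ℂ _ ⟨i, rfl⟩)
  rw [Generates] at hb
  rw [hb] at hle
  exact NonUnitalStarAlgebra.eq_top_iff.mpr fun x =>
    hle (NonUnitalStarAlgebra.mem_top (x := (x : Unitization ℂ A)))

lemma generates_of_one_mem_closure {b : Fin k → Unitization ℂ A}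
    (h1 : (1 : Unitization ℂ A) ∈ (adjoin ℂ (Set.range b)).topologicalClosure)
    (hsnd : Generates fun i => (b i).snd) : Generates b := by
  set S := (adjoin ℂ (Set.range b)).topologicalClosure
  have hinl : ∀ r : ℂ, (inl r : Unitization ℂ A) ∈ S := fun r => by
    rw [← algebraMap_eq_inl, Algebra.algebraMap_eq_smul_one]
    exact SMulMemClass.smul_mem r h1
  have hinr : (adjoin ℂ (Set.range fun i => (b i).snd)).topologicalClosure ≤
      S.comap (inrNonUnitalStarAlgHom ℂ A) := by
    refine NonUnitalStarSubalgebra.topologicalClosure_minimal _ (adjoin_le ?_)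
      ((NonUnitalStarSubalgebra.isClosed_topologicalClosure _).preimage
        Unitization.continuous_inr)
    rintro _ ⟨i, rfl⟩
    have hbi : b i ∈ S :=
      NonUnitalStarSubalgebra.le_topologicalClosure _ (subset_adjoin ℂ _ ⟨i, rfl⟩)
    change (inr (b i).snd : Unitization ℂ A) ∈ S
    rw [eq_sub_of_add_eq' (inl_fst_add_inr_snd_eq (b i))]
    exact sub_mem hbi (hinl _)
  rw [Generates] at hsnd
  rw [hsnd] at hinr
  refine NonUnitalStarAlgebra.eq_top_iff.mpr fun z => ?_
  rw [← inl_fst_add_inr_snd_eq z]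
  exact add_mem (hinl _) (hinr NonUnitalStarAlgebra.mem_top)

lemma generates_iff_isUnit_sum_sq {b : Fin k → Unitization ℂ A}
    (hb : ∀ i, IsSelfAdjoint (b i)) :
    Generates b ↔ IsUnit (∑ i, b i ^ 2) ∧ Generates fun i => (b i).snd := by
  refine ⟨fun h => ⟨isUnit_sum_sq_of_one_mem_closure_adjoin hb ?_, h.snd⟩,
    fun ⟨hu, hsnd⟩ => generates_of_one_mem_closure ?_ hsnd⟩
  · rw [Generates] at h
    exact h ▸ NonUnitalStarAlgebra.mem_top
  · refine NonUnitalStarSubalgebra.one_mem_of_isUnit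
      (NonUnitalStarSubalgebra.isClosed_topologicalClosure _) ?_ hu
    refine NonUnitalStarSubalgebra.le_topologicalClosure _ (sum_mem fun i _ => ?_)
    rw [sq]
    exact mul_mem (subset_adjoin ℂ _ ⟨i, rfl⟩) (subset_adjoin ℂ _ ⟨i, rfl⟩)

lemma mem_closure_setOf_generates_snd
    (hdense : ∀ a : Fin k → A, (∀ i, IsSelfAdjoint (a i)) →
      a ∈ closure {b : Fin k → A | (∀ i, IsSelfAdjoint (b i)) ∧ Generates b})
    {d : Fin k → Unitization ℂ A} (hd : ∀ i, IsSelfAdjoint (d i)) :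
    d ∈ closure {e : Fin k → Unitization ℂ A |
      (∀ i, IsSelfAdjoint (e i)) ∧ Generates fun i => (e i).snd} := by
  let φ : (Fin k → A) → Fin k → Unitization ℂ A := fun c i => d i + inr (c i - (d i).snd)
  have hφd : φ (fun i => (d i).snd) = d := by simp [φ]
  rw [← hφd]
  refine map_mem_closure (by fun_prop) (hdense _ fun i => isSelfAdjoint_snd (hd i)) ?_
  rintro c ⟨hc, hgen⟩
  have hφc : (fun i => (φ c i).snd) = c := by
    funext i
    simp only [φ, snd_add, snd_inr, add_sub_cancel]
  refine ⟨fun i => (hd i).add (((hc i).sub (isSelfAdjoint_snd (hd i))).inr ℂ), ?_⟩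
  rwa [hφc]

end Generates

theorem gr_eq_max_rr_grSa_general {A : Type*} [NonUnitalCStarAlgebra A] {k : ℕ} :
    (∀ a : Fin k → Unitization ℂ A, (∀ i, IsSelfAdjoint (a i)) →
      a ∈ closure {b : Fin k → Unitization ℂ A | (∀ i, IsSelfAdjoint (b i)) ∧ Generates b}) ↔
    ((∀ a : Fin k → A, (∀ i, IsSelfAdjoint (a i)) →
      a ∈ closure {b : Fin k → A | (∀ i, IsSelfAdjoint (b i)) ∧ Generates b}) ∧
     (∀ a : Fin k → Unitization ℂ A, (∀ i, IsSelfAdjoint (a i)) →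
      a ∈ closure {b : Fin k → Unitization ℂ A |
        (∀ i, IsSelfAdjoint (b i)) ∧ IsUnit (∑ i, b i ^ 2)})) := by
  constructor
  · intro hGen
    refine ⟨fun a ha => ?_, fun a ha => closure_mono ?_ (hGen a ha)⟩
    · have hsnd : Set.MapsTo (fun (b : Fin k → Unitization ℂ A) i => (b i).snd)
          {b | (∀ i, IsSelfAdjoint (b i)) ∧ Generates b}
          {c | (∀ i, IsSelfAdjoint (c i)) ∧ Generates c} :=
        fun b hb => ⟨fun i => Unitization.isSelfAdjoint_snd (hb.1 i), hb.2.snd⟩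
      simpa using map_mem_closure (by fun_prop) (hGen _ fun i => (ha i).inr ℂ) hsnd
    · exact fun b hb => ⟨hb.1, ((generates_iff_isUnit_sum_sq hb.1).mp hb.2).1⟩
  · rintro ⟨hGenA, hLg⟩ a ha
    have hU : IsOpen {d : Fin k → Unitization ℂ A | IsUnit (∑ i, d i ^ 2)} :=
      Units.isOpen.preimage (by fun_prop)
    refine closure_minimal (fun b hb => ?_) isClosed_closure (hLg a ha)
    refine closure_mono ?_
      (hU.inter_closure ⟨hb.2, mem_closure_setOf_generates_snd hGenA hb.1⟩)
    exact fun d ⟨hu, hsa, hsnd⟩ => ⟨hsa, (generates_iff_isUnit_sum_sq hsa).mpr ⟨hu, hsnd⟩⟩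

/-- Let `A` be a non-unital C*-algebra with minimal unitization `Ã` and `k ≥ 1`.
Then `Gen_k(Ã)_sa` is dense in `Ã^k_sa` if and only if both `Gen_k(A)_sa` is dense in `A^k_sa`
and `Lg_k(Ã)_sa` is dense in `Ã^k_sa`; i.e. `gr(A) = max {rr(A), gr_sa(A)}`. -/
theorem gr_eq_max_rr_grSa {A : Type*} [NonUnitalCStarAlgebra A]
    (hA : ¬∃ e : A, ∀ x : A, e * x = x ∧ x * e = x) {k : ℕ} (hk : 1 ≤ k) :
    (∀ a : Fin k → Unitization ℂ A, (∀ i, IsSelfAdjoint (a i)) →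
      a ∈ closure {b : Fin k → Unitization ℂ A | (∀ i, IsSelfAdjoint (b i)) ∧ Generates b}) ↔
    ((∀ a : Fin k → A, (∀ i, IsSelfAdjoint (a i)) →
      a ∈ closure {b : Fin k → A | (∀ i, IsSelfAdjoint (b i)) ∧ Generates b}) ∧
     (∀ a : Fin k → Unitization ℂ A, (∀ i, IsSelfAdjoint (a i)) →
      a ∈ closure {b : Fin k → Unitization ℂ A |
        (∀ i, IsSelfAdjoint (b i)) ∧ IsUnit (∑ i, b i ^ 2)})) :=
  gr_eq_max_rr_grSa_general
end

section
/- Let π : A → B be a surjective *-homomorphism between C*-algebras and let k ≥ 1. If Gen_k(Ã)_sa is dense in Ã^k_sa, then Gen_k(B̃)_sa is dense in B̃^k_sa, where à and B̃ denote the minimal unitizations. In particular, gr(A/J) ≤ gr(A) for every closed two-sided ideal J of A. -/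
open scoped CStarAlgebra

/-- Pushing a generating tuple forward along a surjective star homomorphism yields a
generating tuple. -/
lemma generates_comp {A B : Type*} [NonUnitalCStarAlgebra A] [NonUnitalCStarAlgebra B]
    (ψ : A →⋆ₙₐ[ℂ] B) (hψ : Function.Surjective ψ) {k : ℕ} (a : Fin k → A)
    (ha : Generates a) : Generates (⇑ψ ∘ a) := by
  have hψc : Continuous ψ := map_continuous ψ
  rw [Generates, eq_top_iff]
  rintro x -
  obtain ⟨y, rfl⟩ := hψ x
  have hy : y ∈ (NonUnitalStarAlgebra.adjoin ℂ (Set.range a)).topologicalClosure :=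
    ha.symm ▸ trivial
  have hy' : y ∈ closure ((NonUnitalStarAlgebra.adjoin ℂ (Set.range a)) : Set A) := hy
  show ψ y ∈ closure ((NonUnitalStarAlgebra.adjoin ℂ (Set.range (⇑ψ ∘ a))) : Set B)
  refine map_mem_closure hψc hy' ?_
  intro z hz
  have : ψ z ∈ NonUnitalStarSubalgebra.map ψ (NonUnitalStarAlgebra.adjoin ℂ (Set.range a)) :=
    ⟨z, hz, rfl⟩
  rwa [NonUnitalStarAlgHom.map_adjoin, ← Set.range_comp] at this

/-- If `π : A → B` is a surjective *-homomorphism of C*-algebras and `k ≥ 1`,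
then density of `Gen_k(Ã)_sa` in `Ã^k_sa` implies density of `Gen_k(B̃)_sa` in `B̃^k_sa`.
In particular `gr(A/J) ≤ gr(A)`. -/
theorem gr_quotient {A B : Type*} [NonUnitalCStarAlgebra A] [NonUnitalCStarAlgebra B]
    (π : A →⋆ₙₐ[ℂ] B) (hπ : Function.Surjective π) {k : ℕ} (hk : 1 ≤ k)
    (h : ∀ a : Fin k → Unitization ℂ A, (∀ i, IsSelfAdjoint (a i)) →
      a ∈ closure {b : Fin k → Unitization ℂ A | (∀ i, IsSelfAdjoint (b i)) ∧ Generates b}) :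
    ∀ a : Fin k → Unitization ℂ B, (∀ i, IsSelfAdjoint (a i)) →
      a ∈ closure {b : Fin k → Unitization ℂ B | (∀ i, IsSelfAdjoint (b i)) ∧ Generates b} := by
  intro b hb
  set ψ : Unitization ℂ A →⋆ₐ[ℂ] Unitization ℂ B := Unitization.starMap π with hψdef
  have hψs : Function.Surjective ψ := Unitization.starMap_surjective hπ
  -- lift `b` to a selfadjoint tuple `a` over `ψ`
  choose x hx using fun i => hψs (b i)
  set a : Fin k → Unitization ℂ A := fun i => (2⁻¹ : ℂ) • (x i + star (x i)) with hadef
  have hasa : ∀ i, IsSelfAdjoint (a i) := by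
    intro i
    rw [hadef]
    simp only [IsSelfAdjoint, star_smul, star_add, star_star, RCLike.star_def]
    rw [show (starRingEnd ℂ) 2⁻¹ = 2⁻¹ by rw [map_inv₀, Complex.conj_ofNat], add_comm]
  have haψ : ∀ i, ψ (a i) = b i := by
    intro i
    rw [hadef]
    simp only [map_smul, map_add, map_star, hx]
    rw [(hb i).star_eq, ← two_smul ℂ (b i), smul_smul]
    norm_num
  -- approximate
  rw [Metric.mem_closure_iff]
  intro ε hε
  have ha := h a hasa
  rw [Metric.mem_closure_iff] at ha
  obtain ⟨c, ⟨hcsa, hcgen⟩, hcd⟩ := ha ε hε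
  refine ⟨⇑ψ.toNonUnitalStarAlgHom ∘ c, ⟨fun i => (hcsa i).map ψ,
    generates_comp _ hψs c hcgen⟩, ?_⟩
  rw [dist_pi_lt_iff hε] at hcd ⊢
  intro i
  calc dist (b i) ((⇑ψ.toNonUnitalStarAlgHom ∘ c) i) = ‖ψ (a i) - ψ (c i)‖ := by
        rw [dist_eq_norm, haψ i]; rfl
    _ = ‖ψ (a i - c i)‖ := by rw [map_sub]
    _ ≤ ‖a i - c i‖ := NonUnitalStarAlgHom.norm_apply_le ψ _
    _ = dist (a i) (c i) := (dist_eq_norm _ _).symm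
    _ < ε := hcd i
end

section
/- Let A be a unital C*-algebra, let π : A → B be a surjective unital *-homomorphism onto a unital C*-algebra B, and let J = ker(π), a closed two-sided ideal of A regarded as a C*-algebra. Let k, l ≥ 1. If Gen_k(J̃)_sa is dense in J̃^k_sa (where J̃ is the minimal unitization of J) and Gen_l(B)_sa is dense in B^l_sa, then Gen_{k+l}(A)_sa is dense in A^{k+l}_sa. In other words, gr(A) ≤ gr(J) + gr(A/J) + 1 for every closed two-sided ideal J of A. -/
open scoped CStarAlgebra

/-- The kernel of a unital star algebra homomorphism, as a non-unital star subalgebra. -/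
def starAlgHomKer {A B : Type*} [CStarAlgebra A] [CStarAlgebra B] (π : A →⋆ₐ[ℂ] B) :
    NonUnitalStarSubalgebra ℂ A where
  carrier := {a : A | π a = 0}
  add_mem' := by intro a b ha hb; simp only [Set.mem_setOf_eq, map_add] at *; rw [ha, hb, add_zero]
  zero_mem' := by simp
  mul_mem' := by intro a b ha hb; simp only [Set.mem_setOf_eq, map_mul] at *; rw [ha, zero_mul]
  smul_mem' := by intro c a ha; simp only [Set.mem_setOf_eq, map_smul] at *; rw [ha, smul_zero]
  star_mem' := by intro a ha; simp only [Set.mem_setOf_eq, map_star] at *; rw [ha, star_zero]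

lemma starAlgHomKer_isClosed {A B : Type*} [CStarAlgebra A] [CStarAlgebra B]
    (π : A →⋆ₐ[ℂ] B) : IsClosed ((starAlgHomKer π : Set A)) :=
  isClosed_singleton.preimage (map_continuous π)

/-!
Write the tuple as `(x, y)` with `x` of length `k` and `y` of length `l`. Self-adjoint elements of
`B` lift to self-adjoint elements of `A` at the same distance, by clipping the spectrum of an
arbitrary self-adjoint lift; so `y` can be moved slightly to `y'` with `π ∘ y'` generating `B`.
Then `π` maps the C⋆-algebra generated by `y'` densely into `B`, hence each `x i` is close to
`d i + z i` with `d i` in that algebra and `z i ∈ J`, all self-adjoint. Replacing `z` by the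
`J`-parts of a nearby generating tuple of `J̃` gives a tuple `(d + z', y')` close to `(x, y)`.
The closed algebra `E` it generates contains `y'`, hence `d`, hence `z'` and so all of `J`; and
a closed star subalgebra containing `J` whose image under `π` is dense is everything.
-/

open scoped ComplexStarModule

lemma norm_realPart_le {A : Type*} [NormedAddCommGroup A] [NormedSpace ℂ A] [StarAddMonoid A]
    [StarModule ℂ A] [NormedStarGroup A] (a : A) : ‖(ℜ a : A)‖ ≤ ‖a‖ := by
  rw [realPart_apply_coe, norm_smul, norm_inv, Real.norm_two]
  calc 2⁻¹ * ‖a + star a‖ ≤ 2⁻¹ * (‖a‖ + ‖star a‖) := by gcongr; exact norm_add_le _ _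
    _ = ‖a‖ := by rw [norm_star]; ring

lemma realPart_mem {A S : Type*} [AddCommGroup A] [Module ℂ A] [StarAddMonoid A] [StarModule ℂ A]
    [SetLike S A] [AddMemClass S A] [StarMemClass S A] [SMulMemClass S ℂ A] {s : S} {a : A}
    (ha : a ∈ s) : (ℜ a : A) ∈ s := by
  rw [realPart_apply_coe, ← Complex.coe_smul]
  exact SMulMemClass.smul_mem _ (add_mem ha (star_mem ha))

section Lift

variable {A B : Type*} [CStarAlgebra A] [CStarAlgebra B] (π : A →⋆ₐ[ℂ] B)

/-- Clipping the spectrum of `v` to `[-‖π v‖, ‖π v‖]` does not change `π v`. -/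
lemma exists_isSelfAdjoint_map_eq_norm_le {v : A} (hv : IsSelfAdjoint v) :
    ∃ w : A, IsSelfAdjoint w ∧ π w = π v ∧ ‖w‖ ≤ ‖π v‖ := by
  rcases subsingleton_or_nontrivial B with hB | hB
  · exact ⟨0, .zero A, Subsingleton.elim _ _, norm_zero.trans_le (norm_nonneg _)⟩
  set r := ‖π v‖
  let f : ℝ → ℝ := fun t => max (-r) (min t r)
  refine ⟨cfc f v, cfc_predicate f v, ?_, norm_cfc_le (norm_nonneg _) fun t _ => ?_⟩
  · rw [StarAlgHom.map_cfc π f v (hφ := map_continuous π)]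
    conv_rhs => rw [← cfc_id ℝ (π v) (hv.map π)]
    refine cfc_congr fun t ht => ?_
    have := abs_le.mp (Real.norm_eq_abs t ▸ spectrum.norm_le_norm_of_mem ht)
    simp only [f, id]
    rw [min_eq_left this.2, max_eq_right this.1]
  · rw [Real.norm_eq_abs, abs_le]
    exact ⟨le_max_left _ _, max_le (by linarith [norm_nonneg (π v)]) (min_le_right _ _)⟩

variable {π}

lemma exists_isSelfAdjoint_map_eq_dist_le (hπ : Function.Surjective π) {a : A}
    (ha : IsSelfAdjoint a) {b : B} (hb : IsSelfAdjoint b) :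
    ∃ a' : A, IsSelfAdjoint a' ∧ π a' = b ∧ dist a' a ≤ dist b (π a) := by
  obtain ⟨v, hv⟩ := hπ (b - π a)
  have hv' : π (ℜ v : A) = b - π a := by
    rw [map_realPart, hv, (hb.sub (ha.map π)).coe_realPart]
  obtain ⟨w, hw, hwv, hw_le⟩ := exists_isSelfAdjoint_map_eq_norm_le π (ℜ v).prop
  refine ⟨a + w, ha.add hw, by rw [map_add, hwv, hv', add_sub_cancel], ?_⟩
  rwa [dist_eq_norm, dist_eq_norm, add_sub_cancel_left, ← hv']

end Lift

namespace Unitization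

section Norm

variable {𝕜 A : Type*} [NontriviallyNormedField 𝕜] [NonUnitalNormedRing A] [NormedSpace 𝕜 A]
  [IsScalarTower 𝕜 A A] [SMulCommClass 𝕜 A A] [RegularNormedAlgebra 𝕜 A]

lemma norm_fst_le (x : Unitization 𝕜 A) : ‖x.fst‖ ≤ ‖x‖ := by
  rw [norm_eq_sup]
  exact le_sup_left

lemma norm_inl_le (c : 𝕜) : ‖(inl c : Unitization 𝕜 A)‖ ≤ ‖c‖ := by
  rw [norm_eq_sup, fst_inl, snd_inl, map_zero, add_zero, Algebra.algebraMap_eq_smul_one]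
  refine sup_le le_rfl ((norm_smul_le _ _).trans ?_)
  exact mul_le_of_le_one_right (norm_nonneg c) ContinuousLinearMap.norm_id_le

lemma norm_snd_le (x : Unitization 𝕜 A) : ‖x.snd‖ ≤ 2 * ‖x‖ := by
  rw [← norm_inr (𝕜 := 𝕜), ← add_sub_cancel_left (inl x.fst) (x.snd : Unitization 𝕜 A),
    inl_fst_add_inr_snd_eq]
  calc ‖x - inl x.fst‖ ≤ ‖x‖ + ‖(inl x.fst : Unitization 𝕜 A)‖ := norm_sub_le _ _
    _ ≤ ‖x‖ + ‖x‖ := by gcongr; exact (norm_inl_le _).trans (norm_fst_le x)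
    _ = 2 * ‖x‖ := by ring

end Norm

variable {R A : Type*} [CommSemiring R] [StarRing R] [NonUnitalSemiring A] [StarRing A]
  [Module R A]

def sndPreimage (E : NonUnitalStarSubalgebra R A) :
    NonUnitalStarSubalgebra R (Unitization R A) where
  carrier := {x | x.snd ∈ E}
  add_mem' hx hy := by simpa using add_mem hx hy
  zero_mem' := by simp
  mul_mem' {x y} hx hy := by
    simpa using add_mem (add_mem (SMulMemClass.smul_mem x.fst hy) (SMulMemClass.smul_mem y.fst hx))
      (mul_mem hx hy)
  smul_mem' c x hx := by simpa using SMulMemClass.smul_mem c hx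
  star_mem' hx := by simpa using star_mem hx

@[simp]
lemma mem_sndPreimage {E : NonUnitalStarSubalgebra R A} {x : Unitization R A} :
    x ∈ sndPreimage E ↔ x.snd ∈ E :=
  Iff.rfl

end Unitization

lemma IsSelfAdjoint.snd {R A : Type*} [Star R] [Star A] {x : Unitization R A}
    (hx : IsSelfAdjoint x) : IsSelfAdjoint x.snd := by
  rw [IsSelfAdjoint, ← Unitization.snd_star, hx.star_eq]

lemma Fin.dist_append_lt {α : Type*} [PseudoMetricSpace α] {m n : ℕ} {x x' : Fin m → α}
    {y y' : Fin n → α} {ε : ℝ} (hε : 0 < ε) (hx : dist x x' < ε) (hy : dist y y' < ε) :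
    dist (Fin.append x y) (Fin.append x' y') < ε := by
  rw [dist_pi_lt_iff hε, Fin.forall_fin_add]
  simp only [Fin.append_left, Fin.append_right]
  exact ⟨(dist_pi_lt_iff hε).1 hx, (dist_pi_lt_iff hε).1 hy⟩

lemma Generates.eq_top_of_snd_mem {J : Type*} [NonUnitalCStarAlgebra J] {k : ℕ}
    {g : Fin k → Unitization ℂ J} (hg : Generates g) {E : NonUnitalStarSubalgebra ℂ J}
    (hE : IsClosed (E : Set J)) (hgE : ∀ i, (g i).snd ∈ E) : E = ⊤ := by
  have hle : (NonUnitalStarAlgebra.adjoin ℂ (Set.range g)).topologicalClosure ≤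
      Unitization.sndPreimage E :=
    NonUnitalStarSubalgebra.topologicalClosure_minimal _
      (NonUnitalStarAlgebra.adjoin_le (Set.range_subset_iff.2 hgE))
      (hE.preimage Unitization.continuous_snd)
  rw [show _ = ⊤ from hg] at hle
  exact eq_top_iff.2 fun z _ => by simpa using hle (Set.mem_univ (z : Unitization ℂ J))

lemma Generates.dense_image_adjoin {A B F : Type*} [NonUnitalCStarAlgebra A]
    [NonUnitalCStarAlgebra B] [FunLike F A B] [NonUnitalAlgHomClass F ℂ A B] [StarHomClass F A B]
    {φ : F} {l : ℕ} {y : Fin l → A} (hy : Generates (φ ∘ y)) :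
    Dense (φ '' NonUnitalStarAlgebra.adjoin ℂ (Set.range y)) := by
  rw [← NonUnitalStarSubalgebra.coe_map, NonUnitalStarAlgHom.map_adjoin, ← Set.range_comp]
  exact dense_iff_closure_eq.2 (congrArg SetLike.coe (show _ = ⊤ from hy))

section Extension

variable {A B : Type*} [CStarAlgebra A] [CStarAlgebra B] {π : A →⋆ₐ[ℂ] B}

lemma exists_isSelfAdjoint_mem_add_ker_dist_lt (hπ : Function.Surjective π)
    {S : NonUnitalStarSubalgebra ℂ A} {v : A} (hv : IsSelfAdjoint v)
    (hvS : π v ∈ closure (π '' S)) {δ : ℝ} (hδ : 0 < δ) :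
    ∃ q ∈ S, ∃ z : A, IsSelfAdjoint q ∧ IsSelfAdjoint z ∧ π z = 0 ∧ dist v (q + z) < δ := by
  obtain ⟨_, ⟨p, hpS, rfl⟩, hp⟩ := Metric.mem_closure_iff.1 hvS δ hδ
  set q : A := (ℜ p : A)
  have hq : dist (π v) (π q) < δ := by
    have : π v - π q = ℜ (π v - π p) := by
      rw [map_realPart, map_sub, AddSubgroupClass.coe_sub, (hv.map π).coe_realPart]
    rw [dist_eq_norm, this]
    exact (norm_realPart_le _).trans_lt (by rwa [← dist_eq_norm])
  obtain ⟨z, hz, hπz, hzd⟩ :=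
    exists_isSelfAdjoint_map_eq_dist_le hπ (hv.sub (ℜ p).prop) (.zero B)
  refine ⟨q, realPart_mem hpS, z, (ℜ p).prop, hz, hπz, ?_⟩
  calc dist v (q + z) = dist z (v - q) := by
        rw [dist_eq_norm, dist_eq_norm, ← norm_neg]; congr 1; abel
    _ ≤ dist 0 (π (v - q)) := hzd
    _ = dist (π v) (π q) := by rw [map_sub, dist_comm, dist_eq_norm, sub_zero, dist_eq_norm]
    _ < δ := hq

lemma NonUnitalStarSubalgebra.eq_top_of_ker_le_of_dense_image (hπ : Function.Surjective π)
    {E : NonUnitalStarSubalgebra ℂ A} (hE : IsClosed (E : Set A)) (hker : ∀ z, π z = 0 → z ∈ E)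
    (hdense : Dense (π '' E)) : E = ⊤ := by
  have hsa : ∀ v : A, IsSelfAdjoint v → v ∈ E := fun v hv =>
    hE.closure_subset <| Metric.mem_closure_iff.2 fun δ hδ => by
      obtain ⟨q, hq, z, -, -, hz, hvz⟩ :=
        exists_isSelfAdjoint_mem_add_ker_dist_lt hπ hv (hdense (π v)) hδ
      exact ⟨q + z, add_mem hq (hker z hz), hvz⟩
  refine eq_top_iff.2 fun a _ => ?_
  rw [← realPart_add_I_smul_imaginaryPart a]
  exact add_mem (hsa _ (ℜ a).prop) (SMulMemClass.smul_mem _ (hsa _ (ℑ a).prop))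

attribute [local instance] starAlgHomKer_isClosed

lemma Generates.append_add_snd {k l : ℕ} {g : Fin k → Unitization ℂ (starAlgHomKer π)}
    (hg : Generates g) (hπ : Function.Surjective π)
    {y : Fin l → A} (hy : Generates (π ∘ y)) {d : Fin k → A}
    (hd : ∀ i, d i ∈ NonUnitalStarAlgebra.adjoin ℂ (Set.range y)) :
    Generates (Fin.append (fun i => d i + (g i).snd) y) := by
  set b := Fin.append (fun i => d i + ((g i).snd : A)) y
  set E := (NonUnitalStarAlgebra.adjoin ℂ (Set.range b)).topologicalClosure
  have hE : IsClosed (E : Set A) := NonUnitalStarSubalgebra.isClosed_topologicalClosure _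
  have hbE : ∀ m, b m ∈ E := fun m => NonUnitalStarSubalgebra.le_topologicalClosure _
    (NonUnitalStarAlgebra.subset_adjoin ℂ _ ⟨m, rfl⟩)
  have hyE : NonUnitalStarAlgebra.adjoin ℂ (Set.range y) ≤ E :=
    NonUnitalStarAlgebra.adjoin_le <| Set.range_subset_iff.2 fun j => by
      simpa [b] using hbE (Fin.natAdd k j)
  have hgE : ∀ i, ((g i).snd : A) ∈ E := fun i => by
    simpa [b] using sub_mem (hbE (Fin.castAdd l i)) (hyE (hd i))
  have hker : ∀ z, π z = 0 → z ∈ E := by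
    have := hg.eq_top_of_snd_mem (E := E.comap (NonUnitalStarSubalgebraClass.subtype _))
      (hE.preimage continuous_subtype_val) hgE
    exact fun z hz => this.ge (NonUnitalStarAlgebra.mem_top (x := ⟨z, hz⟩))
  exact NonUnitalStarSubalgebra.eq_top_of_ker_le_of_dense_image hπ hE hker
    (hy.dense_image_adjoin.mono (Set.image_mono hyE))

lemma exists_isSelfAdjoint_generates_append (hπ : Function.Surjective π) {k l : ℕ}
    (hJ : ∀ a : Fin k → Unitization ℂ (starAlgHomKer π), (∀ i, IsSelfAdjoint (a i)) →
      a ∈ closure {b : Fin k → Unitization ℂ (starAlgHomKer π) |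
        (∀ i, IsSelfAdjoint (b i)) ∧ Generates b})
    {y : Fin l → A} (hy : Generates (π ∘ y)) {x : Fin k → A} (hx : ∀ i, IsSelfAdjoint (x i))
    {ε : ℝ} (hε : 0 < ε) :
    ∃ x' : Fin k → A, (∀ i, IsSelfAdjoint (x' i)) ∧ Generates (Fin.append x' y) ∧
      dist x x' < ε := by
  choose d hdS z hd hz hπz hdz using fun i => exists_isSelfAdjoint_mem_add_ker_dist_lt hπ (hx i)
    (hy.dense_image_adjoin (π (x i))) (half_pos hε)
  let z' : Fin k → Unitization ℂ (starAlgHomKer π) := fun i => (⟨z i, hπz i⟩ : starAlgHomKer π)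
  have hz' : ∀ i, IsSelfAdjoint (z' i) := fun i => .inr ℂ (Subtype.ext (hz i).star_eq)
  obtain ⟨g, ⟨hg_sa, hg⟩, hgz⟩ := Metric.mem_closure_iff.1 (hJ z' hz') (ε / 4) (by positivity)
  refine ⟨fun i => d i + (g i).snd,
    fun i => (hd i).add (congrArg Subtype.val (hg_sa i).snd.star_eq),
    hg.append_add_snd hπ hy hdS, (dist_pi_lt_iff hε).2 fun i => ?_⟩
  have hgz_i : dist (z i) (g i).snd < ε / 2 := calc
    dist (z i) (g i).snd = ‖(g i - z' i).snd‖ := by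
      rw [dist_comm, dist_eq_norm]; rfl
    _ ≤ 2 * ‖g i - z' i‖ := Unitization.norm_snd_le _
    _ < 2 * (ε / 4) := by
      rw [← dist_eq_norm, dist_comm]; gcongr; exact (dist_le_pi_dist _ _ i).trans_lt hgz
    _ = ε / 2 := by ring
  calc dist (x i) (d i + (g i).snd) ≤ dist (x i) (d i + z i) + dist (z i) (g i).snd := by
        rw [← dist_add_left (d i) (z i)]; exact dist_triangle _ _ _
    _ < ε / 2 + ε / 2 := add_lt_add (hdz i) hgz_i
    _ = ε := add_halves ε

end Extension

theorem gr_extension_general {A B : Type*} [CStarAlgebra A] [CStarAlgebra B]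
    (π : A →⋆ₐ[ℂ] B) (hπ : Function.Surjective π) {k l : ℕ} :
    haveI : IsClosed ((starAlgHomKer π : Set A)) := starAlgHomKer_isClosed π
    (∀ a : Fin k → Unitization ℂ (starAlgHomKer π), (∀ i, IsSelfAdjoint (a i)) →
      a ∈ closure {b : Fin k → Unitization ℂ (starAlgHomKer π) |
        (∀ i, IsSelfAdjoint (b i)) ∧ Generates b}) →
    (∀ a : Fin l → B, (∀ i, IsSelfAdjoint (a i)) →
      a ∈ closure {b : Fin l → B | (∀ i, IsSelfAdjoint (b i)) ∧ Generates b}) →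
    (∀ a : Fin (k + l) → A, (∀ i, IsSelfAdjoint (a i)) →
      a ∈ closure {b : Fin (k + l) → A | (∀ i, IsSelfAdjoint (b i)) ∧ Generates b}) := by
  intro hJ hB a ha
  obtain ⟨x, y, rfl⟩ : ∃ x y, a = Fin.append x y := ⟨_, _, Fin.append_castAdd_natAdd.symm⟩
  simp only [Fin.forall_fin_add, Fin.append_left, Fin.append_right] at ha
  obtain ⟨hx, hy⟩ := ha
  refine Metric.mem_closure_iff.2 fun ε hε => ?_
  obtain ⟨c, ⟨hc_sa, hc⟩, hyc⟩ := Metric.mem_closure_iff.1 (hB (π ∘ y) fun j => (hy j).map π) ε hε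
  choose y' hy'_sa hy'_map hy'_dist using fun j =>
    exists_isSelfAdjoint_map_eq_dist_le hπ (hy j) (hc_sa j)
  obtain ⟨x', hx'_sa, hgen, hxx'⟩ := exists_isSelfAdjoint_generates_append hπ hJ
    (y := y') (by rwa [show π ∘ y' = c from funext hy'_map]) hx hε
  refine ⟨Fin.append x' y', ⟨(Fin.forall_fin_add _).2 ⟨by simpa, by simpa⟩, hgen⟩,
    Fin.dist_append_lt hε hxx' ((dist_pi_lt_iff hε).2 fun j => ?_)⟩
  rw [dist_comm]
  exact (hy'_dist j).trans_lt ((dist_le_pi_dist c (π ∘ y) j).trans_lt (by rwa [dist_comm]))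

/-- Given a surjective unital *-homomorphism `π : A → B` with kernel `J`, if
`Gen_k(J̃)_sa` is dense in `J̃^k_sa` and `Gen_l(B)_sa` is dense in `B^l_sa`, then
`Gen_{k+l}(A)_sa` is dense in `A^{k+l}_sa`. In other words,
`gr(A) ≤ gr(J) + gr(A/J) + 1`. -/
theorem gr_extension {A B : Type*} [CStarAlgebra A] [CStarAlgebra B]
    (π : A →⋆ₐ[ℂ] B) (hπ : Function.Surjective π) {k l : ℕ} (hk : 1 ≤ k) (hl : 1 ≤ l) :
    haveI : IsClosed ((starAlgHomKer π : Set A)) := starAlgHomKer_isClosed π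
    (∀ a : Fin k → Unitization ℂ (starAlgHomKer π), (∀ i, IsSelfAdjoint (a i)) →
      a ∈ closure {b : Fin k → Unitization ℂ (starAlgHomKer π) |
        (∀ i, IsSelfAdjoint (b i)) ∧ Generates b}) →
    (∀ a : Fin l → B, (∀ i, IsSelfAdjoint (a i)) →
      a ∈ closure {b : Fin l → B | (∀ i, IsSelfAdjoint (b i)) ∧ Generates b}) →
    (∀ a : Fin (k + l) → A, (∀ i, IsSelfAdjoint (a i)) →
      a ∈ closure {b : Fin (k + l) → A | (∀ i, IsSelfAdjoint (b i)) ∧ Generates b}) :=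
  gr_extension_general π hπ
end

section
/- Let n ≥ 2 and let M_n denote the C*-algebra of n×n complex matrices. Then Gen_2(M_n)_sa is dense in (M_n)²_sa, while Gen_1(M_n)_sa is empty; hence gr(M_n) = 1. -/
/-!
A single self-adjoint matrix generates a commutative algebra, which cannot be `M_n` for `n ≥ 2`.

For density, write `a₀ = U diag(d) U*`; conjugation by `U` preserves self-adjoint generating
pairs, so we may assume `a₀ = diag(d)`. Perturb the pair to `(diag(dᵢ + t(i+1)), a₁ + tJ)`, with
`J` the all-ones matrix. For all small `t ≠ 0` the diagonal entries are distinct and nonzero and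
all entries of `a₁ + tJ` are nonzero. Such a pair generates `M_n`: the diagonal matrices
`D ∏_{j ≠ i} (D - μⱼ)`, polynomials without constant term in `D = diag(μ)`, are nonzero multiples
of `eᵢᵢ`, and `eᵢᵢ B eⱼⱼ = Bᵢⱼ eᵢⱼ`.
-/

def MatGenerates {n k : ℕ} (a : Fin k → Matrix (Fin n) (Fin n) ℂ) : Prop :=
  (NonUnitalStarAlgebra.adjoin ℂ (Set.range a)).topologicalClosure = ⊤

open Filter Topology Matrix Finset

namespace Matrix

variable {K ι : Type*} [Fintype ι] [DecidableEq ι]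

theorem not_commute_single_single [Semiring K] [Nontrivial K] {i j : ι} (hij : i ≠ j) :
    ¬ Commute (single i j (1 : K)) (single j i 1) := fun h => by
  simpa using row_eq_zero_of_commute_single h hij

theorem diagonal_mul_prod_sub_mem [CommRing K] {S : NonUnitalSubalgebra K (Matrix ι ι K)}
    {μ : ι → K} (hμ : diagonal μ ∈ S) (s : Finset ι) :
    diagonal (fun k => μ k * ∏ j ∈ s, (μ k - μ j)) ∈ S := by
  induction s using Finset.induction_on with
  | empty => simpa using hμ
  | insert j s hj ih =>
    have h : diagonal (fun k => μ k * ∏ i ∈ insert j s, (μ k - μ i)) =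
        diagonal (fun k => μ k * ∏ i ∈ s, (μ k - μ i)) * diagonal μ -
          μ j • diagonal (fun k => μ k * ∏ i ∈ s, (μ k - μ i)) := by
      rw [diagonal_mul_diagonal, ← diagonal_smul, diagonal_sub]
      congr 1
      ext k
      simp only [prod_insert hj, Pi.smul_apply, smul_eq_mul]
      ring
    rw [h]
    exact sub_mem (mul_mem ih hμ) (SMulMemClass.smul_mem _ ih)

variable [Field K] {S : NonUnitalSubalgebra K (Matrix ι ι K)}

theorem single_mem_of_diagonal_mem {μ : ι → K} (hμ : diagonal μ ∈ S)
    (hinj : Function.Injective μ) (h0 : ∀ i, μ i ≠ 0) (i : ι) : single i i 1 ∈ S := by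
  set c := μ i * ∏ j ∈ univ.erase i, (μ i - μ j)
  have hc : c ≠ 0 := mul_ne_zero (h0 i) <| prod_ne_zero_iff.2 fun j hj =>
    sub_ne_zero.2 (hinj.ne (ne_of_mem_erase hj).symm)
  have hsingle : (fun k => μ k * ∏ j ∈ univ.erase i, (μ k - μ j)) = Pi.single i c := by
    ext k
    obtain rfl | hk := eq_or_ne k i
    · simp [c]
    · rw [Pi.single_eq_of_ne hk]
      exact mul_eq_zero_of_right _ (prod_eq_zero (mem_erase.2 ⟨hk, mem_univ k⟩) (sub_self _))
  have h := SMulMemClass.smul_mem c⁻¹ (diagonal_mul_prod_sub_mem hμ (univ.erase i))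
  rwa [hsingle, diagonal_single, smul_single, smul_eq_mul, inv_mul_cancel₀ hc] at h

theorem single_mem_of_apply_ne_zero {i j : ι} (hi : single i i 1 ∈ S) (hj : single j j 1 ∈ S)
    {B : Matrix ι ι K} (hB : B ∈ S) (hBij : B i j ≠ 0) : single i j 1 ∈ S := by
  have h := SMulMemClass.smul_mem (B i j)⁻¹ (mul_mem (mul_mem hi hB) hj)
  rwa [single_mul_mul_single, one_mul, mul_one, smul_single, smul_eq_mul,
    inv_mul_cancel₀ hBij] at h

theorem nonUnitalSubalgebra_eq_top_of_single_mem (h : ∀ i j, single i j (1 : K) ∈ S) :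
    S = ⊤ := by
  refine eq_top_iff.2 fun x _ => ?_
  rw [matrix_eq_sum_single x]
  refine sum_mem fun i _ => sum_mem fun j _ => ?_
  simpa [smul_single] using SMulMemClass.smul_mem (x i j) (h i j)

theorem nonUnitalSubalgebra_eq_top_of_diagonal_mem {μ : ι → K} (hμ : diagonal μ ∈ S)
    (hinj : Function.Injective μ) (h0 : ∀ i, μ i ≠ 0) {B : Matrix ι ι K} (hB : B ∈ S)
    (hoff : ∀ i j, i ≠ j → B i j ≠ 0) : S = ⊤ := by
  have hdiag := single_mem_of_diagonal_mem hμ hinj h0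
  refine nonUnitalSubalgebra_eq_top_of_single_mem fun i j => ?_
  obtain rfl | hij := eq_or_ne i j
  · exact hdiag i
  · exact single_mem_of_apply_ne_zero (hdiag i) (hdiag j) hB (hoff i j hij)

end Matrix

/-- `Gen_k(M_n)_sa`. -/
def selfAdjointGenerators (n k : ℕ) : Set (Fin k → Matrix (Fin n) (Fin n) ℂ) :=
  {b | (∀ i, IsSelfAdjoint (b i)) ∧ MatGenerates b}

section MatGenerates

variable {n k : ℕ}

theorem matGenerates_iff {a : Fin k → Matrix (Fin n) (Fin n) ℂ} :
    MatGenerates a ↔ NonUnitalStarAlgebra.adjoin ℂ (Set.range a) = ⊤ := by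
  set S := NonUnitalStarAlgebra.adjoin ℂ (Set.range a)
  have hS : IsClosed (S : Set (Matrix (Fin n) (Fin n) ℂ)) :=
    S.toNonUnitalSubalgebra.toSubmodule.closed_of_finiteDimensional
  rw [MatGenerates, le_antisymm (S.topologicalClosure_minimal le_rfl hS) S.le_topologicalClosure]

theorem MatGenerates.comp (φ : Matrix (Fin n) (Fin n) ℂ ≃⋆ₐ[ℂ] Matrix (Fin n) (Fin n) ℂ)
    {a : Fin k → Matrix (Fin n) (Fin n) ℂ} (h : MatGenerates a) : MatGenerates (φ ∘ a) := by
  rw [matGenerates_iff] at h ⊢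
  rw [Set.range_comp, ← NonUnitalStarAlgHom.map_adjoin, h, NonUnitalStarAlgebra.map_top,
    NonUnitalStarAlgebra.range_eq_top]
  exact φ.surjective

theorem not_matGenerates_of_isSelfAdjoint (hn : 2 ≤ n) {a : Fin 1 → Matrix (Fin n) (Fin n) ℂ}
    (ha : IsSelfAdjoint (a 0)) : ¬ MatGenerates a := by
  have : IsStarNormal (a 0) := ha.isStarNormal
  rw [matGenerates_iff, Set.range_unique]
  intro htop
  have hmem : ∀ x, x ∈ NonUnitalStarAlgebra.adjoin ℂ {a default} := fun x => htop ▸ trivial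
  let i : Fin n := ⟨0, by omega⟩
  let j : Fin n := ⟨1, by omega⟩
  exact not_commute_single_single (K := ℂ) (i := i) (j := j) (by simp [i, j, Fin.ext_iff])
    (setLike_mul_comm (hmem _) (hmem _))

theorem pair_mem_selfAdjointGenerators {μ : Fin n → ℝ} (hinj : Function.Injective μ)
    (h0 : ∀ i, μ i ≠ 0) {B : Matrix (Fin n) (Fin n) ℂ} (hB : IsSelfAdjoint B)
    (hoff : ∀ i j, i ≠ j → B i j ≠ 0) :
    ![diagonal (fun i => (μ i : ℂ)), B] ∈ selfAdjointGenerators n 2 := by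
  refine ⟨Fin.forall_fin_two.2 ⟨?_, hB⟩, ?_⟩
  · exact isHermitian_diagonal_of_self_adjoint _ (funext fun i => Complex.conj_ofReal (μ i))
  rw [matGenerates_iff, range_cons_cons_empty,
    ← NonUnitalStarAlgebra.toNonUnitalSubalgebra_eq_top]
  refine nonUnitalSubalgebra_eq_top_of_diagonal_mem
    (NonUnitalStarAlgebra.subset_adjoin ℂ _ (Set.mem_insert _ _))
    (Complex.ofReal_injective.comp hinj) (fun i => Complex.ofReal_ne_zero.2 (h0 i))
    (NonUnitalStarAlgebra.subset_adjoin ℂ _ (Set.mem_insert_of_mem _ rfl)) hoff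

theorem comp_mem_closure_selfAdjointGenerators_iff
    (φ : Matrix (Fin n) (Fin n) ℂ ≃⋆ₐ[ℂ] Matrix (Fin n) (Fin n) ℂ)
    {b : Fin k → Matrix (Fin n) (Fin n) ℂ} :
    φ ∘ b ∈ closure (selfAdjointGenerators n k) ↔ b ∈ closure (selfAdjointGenerators n k) := by
  have hmap (ψ : Matrix (Fin n) (Fin n) ℂ ≃⋆ₐ[ℂ] Matrix (Fin n) (Fin n) ℂ) :
      Set.MapsTo (ψ ∘ ·) (closure (selfAdjointGenerators n k))
        (closure (selfAdjointGenerators n k)) :=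
    Set.MapsTo.closure (fun _ hb => ⟨fun i => (hb.1 i).map ψ, hb.2.comp ψ⟩) <| continuous_pi
      fun i => ψ.toAlgEquiv.toLinearMap.continuous_of_finiteDimensional.comp (continuous_apply i)
  refine ⟨fun h => ?_, fun h => hmap φ h⟩
  simpa only [Function.comp_def, StarAlgEquiv.symm_apply_apply] using hmap φ.symm h

theorem eventually_add_mul_ne_zero (c : ℝ) {s : ℝ} (hs : s ≠ 0) :
    ∀ᶠ t in 𝓝[≠] (0 : ℝ), c + t * s ≠ 0 := by
  obtain rfl | hc := eq_or_ne c 0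
  · exact eventually_nhdsWithin_of_forall fun t (ht : t ≠ 0) => by simpa using ⟨ht, hs⟩
  · exact nhdsWithin_le_nhds (ContinuousAt.eventually_ne (by fun_prop) (by simpa using hc))

theorem mem_closure_selfAdjointGenerators_of_diagonal {b : Fin 2 → Matrix (Fin n) (Fin n) ℂ}
    {d : Fin n → ℝ} (hb0 : b 0 = diagonal (fun i => (d i : ℂ))) (hb1 : IsSelfAdjoint (b 1)) :
    b ∈ closure (selfAdjointGenerators n 2) := by
  let μ : ℝ → Fin n → ℝ := fun t i => d i + t * ((i : ℕ) + 1)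
  let J : Matrix (Fin n) (Fin n) ℂ := of fun _ _ => 1
  let p : ℝ → Fin 2 → Matrix (Fin n) (Fin n) ℂ :=
    fun t => ![diagonal fun i => (μ t i : ℂ), b 1 + t • J]
  have hp : Tendsto p (𝓝[≠] 0) (𝓝 b) := by
    have hp0 : p 0 = b := by ext1 i; fin_cases i <;> simp [p, μ, hb0]
    have hcont : Continuous p := by
      refine continuous_pi (Fin.forall_fin_two.2 ⟨?_, ?_⟩) <;> simp only [p, μ] <;> fun_prop
    exact hp0 ▸ hcont.continuousAt.tendsto.mono_left nhdsWithin_le_nhds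
  have hinj : ∀ᶠ t in 𝓝[≠] (0 : ℝ), Function.Injective (μ t) := by
    have h : ∀ i j : Fin n, ∀ᶠ t in 𝓝[≠] (0 : ℝ), μ t i = μ t j → i = j := fun i j => by
      obtain rfl | hij := eq_or_ne i j
      · exact Eventually.of_forall fun _ _ => rfl
      have hs : ((i : ℕ) : ℝ) - (j : ℕ) ≠ 0 :=
        sub_ne_zero.2 (by exact_mod_cast Fin.val_ne_of_ne hij)
      refine (eventually_add_mul_ne_zero (d i - d j) hs).mono fun t ht h => absurd ?_ ht
      simp only [μ] at h
      linarith
    exact eventually_all.2 fun i => eventually_all.2 (h i)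
  have hne : ∀ᶠ t in 𝓝[≠] (0 : ℝ), ∀ i, μ t i ≠ 0 :=
    eventually_all.2 fun i => eventually_add_mul_ne_zero (d i) (by positivity)
  have hentries : ∀ᶠ t : ℝ in 𝓝[≠] 0, ∀ i j, b 1 i j + t ≠ 0 :=
    eventually_all.2 fun i => eventually_all.2 fun j =>
      (eventually_add_mul_ne_zero (b 1 i j).re one_ne_zero).mono fun t ht h =>
        ht (by simpa using congrArg Complex.re h)
  have hJ : IsSelfAdjoint J := by ext; simp [J]
  refine mem_closure_of_tendsto hp ((hinj.and (hne.and hentries)).mono fun t ht => ?_)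
  obtain ⟨ht_inj, ht_ne, ht_entries⟩ := ht
  exact pair_mem_selfAdjointGenerators ht_inj ht_ne (hb1.add ((IsSelfAdjoint.all t).smul hJ))
    fun i j _ => by simpa [J] using ht_entries i j

end MatGenerates

/-- For `n ≥ 2`, `Gen_2(M_n)_sa` is dense in `(M_n)²_sa` while `Gen_1(M_n)_sa`
is empty; hence `gr(M_n) = 1`. -/
theorem gr_matrixAlgebra {n : ℕ} (hn : 2 ≤ n) :
    (∀ a : Fin 2 → Matrix (Fin n) (Fin n) ℂ, (∀ i, IsSelfAdjoint (a i)) →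
      a ∈ closure {b : Fin 2 → Matrix (Fin n) (Fin n) ℂ |
        (∀ i, IsSelfAdjoint (b i)) ∧ MatGenerates b}) ∧
    {a : Fin 1 → Matrix (Fin n) (Fin n) ℂ | (∀ i, IsSelfAdjoint (a i)) ∧ MatGenerates a} = ∅ := by
  refine ⟨fun a ha => ?_, Set.eq_empty_of_forall_notMem fun a ha =>
    not_matGenerates_of_isSelfAdjoint hn (ha.1 0) ha.2⟩
  have ha0 : (a 0).IsHermitian := ha 0
  let φ := Unitary.conjStarAlgAut ℂ _ (star ha0.eigenvectorUnitary)
  have hdiag : φ ∘ a ∈ closure (selfAdjointGenerators n 2) :=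
    mem_closure_selfAdjointGenerators_of_diagonal
      ha0.conjStarAlgAut_star_eigenvectorUnitary ((ha 1).map φ)
  exact (comp_mem_closure_selfAdjointGenerators_iff φ).1 hdiag
end

section
/- Let A be a simple C*-algebra (its only closed two-sided ideals are 0 and A, and A ≠ 0), let k ≥ 1, and let a, b ∈ Gen_k(A)_sa be generating self-adjoint k-tuples. Then the tuple a ⊕ b = ((a_1,b_1),…,(a_k,b_k)) lies in Gen_k(A × A)_sa if and only if there is no *-automorphism α of A with α(a_i) = b_i for all i = 1,…,k. -/
open NonUnitalStarAlgebra NonUnitalStarSubalgebra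

/-- A bijective star algebra homomorphism of C*-algebras, as a star algebra equivalence. -/
noncomputable def ofBijectiveCStar {A B : Type*} [NonUnitalCStarAlgebra A]
    [NonUnitalCStarAlgebra B] (f : A →⋆ₙₐ[ℂ] B) (hf : Function.Bijective f) : A ≃⋆ₐ[ℂ] B :=
  { Equiv.ofBijective f hf with
    map_mul' := map_mul f
    map_add' := map_add f
    map_smul' := map_smul f
    map_star' := map_star f }

@[simp] lemma ofBijectiveCStar_apply {A B : Type*} [NonUnitalCStarAlgebra A]
    [NonUnitalCStarAlgebra B] (f : A →⋆ₙₐ[ℂ] B) (hf : Function.Bijective f) (x : A) :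
    ofBijectiveCStar f hf x = f x := rfl

/-- In a simple C*-algebra, for a closed star subalgebra `S ≤ A × A` with dense coordinate
projections which is not everything, the "cross ideal" `{y | (0, y) ∈ S}` is trivial. -/
lemma cross_eq_zero {A : Type*} [NonUnitalCStarAlgebra A]
    (hsimple : ∀ J : TwoSidedIdeal A, IsClosed (J : Set A) → J = ⊥ ∨ J = ⊤)
    (S : NonUnitalStarSubalgebra ℂ (A × A)) (hSc : IsClosed (S : Set (A × A)))
    (h1 : Dense (Prod.fst '' (S : Set (A × A))))
    (h2 : Dense (Prod.snd '' (S : Set (A × A))))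
    (hne : S ≠ ⊤) : ∀ y : A, ((0 : A), y) ∈ S → y = 0 := by
  have key : ∀ y : A, ((0 : A), y) ∈ S → ∀ x : A,
      ((0 : A), x * y) ∈ S ∧ ((0 : A), y * x) ∈ S := by
    intro y hy x
    have hTc : IsClosed {x : A | ((0 : A), x * y) ∈ S ∧ ((0 : A), y * x) ∈ S} := by
      apply IsClosed.inter
      · exact hSc.preimage (continuous_const.prodMk ((continuous_mul_right y)))
      · exact hSc.preimage (continuous_const.prodMk ((continuous_mul_left y)))
    have hsub : Prod.snd '' (S : Set (A × A)) ⊆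
        {x : A | ((0 : A), x * y) ∈ S ∧ ((0 : A), y * x) ∈ S} := by
      rintro _ ⟨⟨p, q⟩, hpq, rfl⟩
      constructor
      · simpa using mul_mem hpq hy
      · simpa using mul_mem hy hpq
    have : closure (Prod.snd '' (S : Set (A × A))) ⊆
        {x : A | ((0 : A), x * y) ∈ S ∧ ((0 : A), y * x) ∈ S} :=
      hTc.closure_subset_iff.mpr hsub
    rw [h2.closure_eq] at this
    exact this (Set.mem_univ x)
  set J : TwoSidedIdeal A := TwoSidedIdeal.mk' {y : A | ((0 : A), y) ∈ S}
    (show ((0 : A), (0 : A)) ∈ S by rw [Prod.mk_zero_zero]; exact S.zero_mem)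
    (fun {u v} hu hv => by
      have hu' : ((0 : A), u) ∈ S := hu
      have hv' : ((0 : A), v) ∈ S := hv
      show ((0 : A), u + v) ∈ S
      simpa using add_mem hu' hv')
    (fun {u} hu => by
      have hu' : ((0 : A), u) ∈ S := hu
      show ((0 : A), -u) ∈ S
      simpa using neg_mem hu')
    (fun {u v} hv => (key v hv u).1)
    (fun {u v} hu => (key u hu v).2) with hJ
  have hJcoe : (J : Set A) = (fun y : A => ((0 : A), y)) ⁻¹' (S : Set (A × A)) := by
    rw [hJ, TwoSidedIdeal.coe_mk']
    rfl
  have hJc : IsClosed (J : Set A) := by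
    rw [hJcoe]
    exact hSc.preimage (continuous_const.prodMk continuous_id)
  rcases hsimple J hJc with hbot | htop
  · intro y hy
    have : y ∈ J := by
      rw [hJ, TwoSidedIdeal.mem_mk']
      exact hy
    rwa [hbot, TwoSidedIdeal.mem_bot] at this
  · exfalso
    have hall : ∀ y : A, ((0 : A), y) ∈ S := by
      intro y
      have : y ∈ J := by rw [htop]; exact TwoSidedIdeal.mem_top _
      rwa [hJ, TwoSidedIdeal.mem_mk'] at this
    have hUc : IsClosed {x : A | (x, (0 : A)) ∈ S} :=
      hSc.preimage (continuous_id.prodMk continuous_const)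
    have hUsub : Prod.fst '' (S : Set (A × A)) ⊆ {x : A | (x, (0 : A)) ∈ S} := by
      rintro _ ⟨⟨p, q⟩, hpq, rfl⟩
      simpa using sub_mem hpq (hall q)
    have hU : ∀ x : A, (x, (0 : A)) ∈ S := by
      intro x
      have : closure (Prod.fst '' (S : Set (A × A))) ⊆ {x : A | (x, (0 : A)) ∈ S} :=
        hUc.closure_subset_iff.mpr hUsub
      rw [h1.closure_eq] at this
      exact this (Set.mem_univ x)
    apply hne
    refine eq_top_iff.mpr fun p _ => ?_
    obtain ⟨x, y⟩ := p
    simpa using add_mem (hU x) (hall y)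

/-- If the direct sum tuple does not generate, then there is a matching automorphism. -/
lemma exists_auto_of_not_generates {A : Type*} [NonUnitalCStarAlgebra A]
    (hsimple : ∀ J : TwoSidedIdeal A, IsClosed (J : Set A) → J = ⊥ ∨ J = ⊤)
    {k : ℕ} (a b : Fin k → A) (hga : Generates a) (hgb : Generates b)
    (hne : ¬ Generates (fun i => (a i, b i) : Fin k → A × A)) :
    ∃ α : A ≃⋆ₐ[ℂ] A, ∀ i, α (a i) = b i := by
  set S : NonUnitalStarSubalgebra ℂ (A × A) :=
    (adjoin ℂ (Set.range (fun i => (a i, b i) : Fin k → A × A))).topologicalClosure with hS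
  have hSc : IsClosed (S : Set (A × A)) := isClosed_topologicalClosure _
  have hSne : S ≠ ⊤ := hne
  -- dense projections
  have hproj : ∀ (f : (A × A) →⋆ₙₐ[ℂ] A) (c : Fin k → A),
      (⇑f ∘ (fun i => (a i, b i)) = c) → Generates c →
      Dense (⇑f '' (S : Set (A × A))) := by
    intro f c hfc hgc
    have hsub : ((adjoin ℂ (Set.range c) : NonUnitalStarSubalgebra ℂ A) : Set A) ⊆
        ⇑f '' (S : Set (A × A)) := by
      intro x hx
      have hx' : x ∈ NonUnitalStarSubalgebra.map f
          (adjoin ℂ (Set.range (fun i => (a i, b i) : Fin k → A × A))) := by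
        rw [NonUnitalStarAlgHom.map_adjoin, ← Set.range_comp, hfc]
        exact hx
      obtain ⟨p, hp, hpx⟩ := hx'
      exact ⟨p, le_topologicalClosure _ hp, hpx⟩
    rw [dense_iff_closure_eq]
    apply Set.eq_univ_of_univ_subset
    calc Set.univ = ((adjoin ℂ (Set.range c)).topologicalClosure : Set A) := by
          rw [hgc]; rfl
      _ ⊆ closure (⇑f '' (S : Set (A × A))) := closure_mono hsub
  have hfst : Dense (Prod.fst '' (S : Set (A × A))) := by
    have := hproj (NonUnitalStarAlgHom.fst ℂ A A) a rfl hga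
    simpa using this
  have hsnd : Dense (Prod.snd '' (S : Set (A × A))) := by
    have := hproj (NonUnitalStarAlgHom.snd ℂ A A) b rfl hgb
    simpa using this
  -- the two cross ideals vanish
  have hcross₂ : ∀ y : A, ((0 : A), y) ∈ S → y = 0 :=
    cross_eq_zero hsimple S hSc hfst hsnd hSne
  have hcross₁ : ∀ x : A, (x, (0 : A)) ∈ S → x = 0 := by
    -- apply the previous result to the swapped subalgebra
    set w : (A × A) →⋆ₙₐ[ℂ] (A × A) :=
      (NonUnitalStarAlgHom.snd ℂ A A).prod (NonUnitalStarAlgHom.fst ℂ A A) with hw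
    have hwapp : ∀ p : A × A, w p = Prod.swap p := fun _ => rfl
    set Sw := NonUnitalStarSubalgebra.map w S with hSw
    have hSwcoe : (Sw : Set (A × A)) = Prod.swap '' (S : Set (A × A)) := by
      rw [hSw, NonUnitalStarSubalgebra.coe_map]
      rfl
    have hSwc : IsClosed (Sw : Set (A × A)) := by
      rw [hSwcoe]
      exact (Homeomorph.prodComm A A).isClosedMap _ hSc
    have hSwfst : Dense (Prod.fst '' (Sw : Set (A × A))) := by
      rw [hSwcoe, Set.image_image]
      exact hsnd
    have hSwsnd : Dense (Prod.snd '' (Sw : Set (A × A))) := by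
      rw [hSwcoe, Set.image_image]
      exact hfst
    have hSwne : Sw ≠ ⊤ := by
      intro htop
      apply hSne
      apply SetLike.coe_injective
      have : Prod.swap '' (Sw : Set (A × A)) = (S : Set (A × A)) := by
        rw [hSwcoe, Set.image_image]
        simp
      rw [← this, htop, coe_top]
      exact Set.image_univ_of_surjective Prod.swap_surjective
    intro x hx
    exact cross_eq_zero hsimple Sw hSwc hSwfst hSwsnd hSwne x ⟨(x, 0), hx, rfl⟩
  -- the coordinate projections restricted to S
  haveI : IsClosed (S : Set (A × A)) := hSc
  set φ : S →⋆ₙₐ[ℂ] A :=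
    (NonUnitalStarAlgHom.fst ℂ A A).comp (NonUnitalStarSubalgebraClass.subtype S) with hφ
  set ψ : S →⋆ₙₐ[ℂ] A :=
    (NonUnitalStarAlgHom.snd ℂ A A).comp (NonUnitalStarSubalgebraClass.subtype S) with hψ
  have hφapp : ∀ s : S, φ s = (s : A × A).1 := fun _ => rfl
  have hψapp : ∀ s : S, ψ s = (s : A × A).2 := fun _ => rfl
  have hrangeφ : Set.range φ = Prod.fst '' (S : Set (A × A)) := by
    ext x
    constructor
    · rintro ⟨⟨p, hp⟩, rfl⟩; exact ⟨p, hp, rfl⟩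
    · rintro ⟨p, hp, rfl⟩; exact ⟨⟨p, hp⟩, rfl⟩
  have hrangeψ : Set.range ψ = Prod.snd '' (S : Set (A × A)) := by
    ext x
    constructor
    · rintro ⟨⟨p, hp⟩, rfl⟩; exact ⟨p, hp, rfl⟩
    · rintro ⟨p, hp, rfl⟩; exact ⟨⟨p, hp⟩, rfl⟩
  have hφinj : Function.Injective φ := by
    rw [injective_iff_map_eq_zero]
    rintro ⟨⟨x, y⟩, hmem⟩ hx0
    rw [hφapp] at hx0
    simp only at hx0
    subst hx0
    have := hcross₂ y hmem
    subst this
    rfl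
  have hψinj : Function.Injective ψ := by
    rw [injective_iff_map_eq_zero]
    rintro ⟨⟨x, y⟩, hmem⟩ hy0
    rw [hψapp] at hy0
    simp only at hy0
    subst hy0
    have := hcross₁ x hmem
    subst this
    rfl
  have hφsurj : Function.Surjective φ := by
    rw [← Set.range_eq_univ, hrangeφ]
    refine Set.eq_univ_of_univ_subset ?_
    rw [← hfst.closure_eq]
    rw [← hrangeφ]
    rw [((NonUnitalStarAlgHom.isometry φ hφinj).isClosedEmbedding).isClosed_range.closure_eq]
  have hψsurj : Function.Surjective ψ := by
    rw [← Set.range_eq_univ, hrangeψ]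
    refine Set.eq_univ_of_univ_subset ?_
    rw [← hsnd.closure_eq]
    rw [← hrangeψ]
    rw [((NonUnitalStarAlgHom.isometry ψ hψinj).isClosedEmbedding).isClosed_range.closure_eq]
  set eφ := ofBijectiveCStar φ ⟨hφinj, hφsurj⟩ with heφ
  set eψ := ofBijectiveCStar ψ ⟨hψinj, hψsurj⟩ with heψ
  refine ⟨eφ.symm.trans eψ, fun i => ?_⟩
  have hmem : ((a i, b i) : A × A) ∈ S :=
    le_topologicalClosure _ (subset_adjoin ℂ _ ⟨i, rfl⟩)
  set s : S := ⟨(a i, b i), hmem⟩ with hs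
  have h1 : eφ s = a i := rfl
  have h2 : eψ s = b i := rfl
  rw [StarAlgEquiv.trans_apply, ← h1, StarAlgEquiv.symm_apply_apply, h2]

/-- Let `A` be a simple C*-algebra (nonzero, and its only closed two-sided
ideals are `0` and `A`), `k ≥ 1`, and let `a, b` be generating self-adjoint `k`-tuples.
Then `a ⊕ b` generates `A × A` iff there is no *-automorphism `α` of `A` with `α (a i) = b i`
for all `i`. -/
theorem gen_direct_sum_iff_no_automorphism {A : Type*} [NonUnitalCStarAlgebra A] [Nontrivial A]
    (hsimple : ∀ J : TwoSidedIdeal A, IsClosed (J : Set A) → J = ⊥ ∨ J = ⊤)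
    {k : ℕ} (hk : 1 ≤ k) (a b : Fin k → A)
    (hsa : ∀ i, IsSelfAdjoint (a i)) (hsb : ∀ i, IsSelfAdjoint (b i))
    (hga : Generates a) (hgb : Generates b) :
    Generates (fun i => (a i, b i) : Fin k → A × A) ↔
      ¬∃ α : A ≃⋆ₐ[ℂ] A, ∀ i, α (a i) = b i := by
  constructor
  · intro hgen
    rintro ⟨α, hα⟩
    -- the graph of α is a proper closed star subalgebra containing all (a i, b i)
    set f : (A × A) →⋆ₙₐ[ℂ] A :=
      (NonUnitalStarAlgHomClass.toNonUnitalStarAlgHom α).comp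
        (NonUnitalStarAlgHom.fst ℂ A A) with hf
    set G := NonUnitalStarAlgHom.equalizer f (NonUnitalStarAlgHom.snd ℂ A A) with hG
    have hGc : IsClosed (G : Set (A × A)) := by
      have hcont : Continuous α :=
        (NonUnitalStarAlgHom.isometry α (EquivLike.injective α)).continuous
      exact isClosed_eq (hcont.comp continuous_fst) continuous_snd
    have hle : (adjoin ℂ (Set.range (fun i => (a i, b i) : Fin k → A × A))).topologicalClosure
        ≤ G := by
      apply topologicalClosure_minimal
      · apply adjoin_le
        rintro _ ⟨i, rfl⟩
        exact hα i
      · exact hGc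
    rw [hgen] at hle
    obtain ⟨x, hx⟩ := exists_ne (0 : A)
    have hmem : ((x, 0) : A × A) ∈ G := hle trivial
    have : α x = 0 := hmem
    exact hx (EquivLike.injective α (by simpa using this))
  · intro h
    by_contra hgen
    exact h (exists_auto_of_not_generates hsimple a b hga hgb hgen)
end

section
/- Let A be a C*-algebra. If for some l ≥ 1 the set Gen_l(A)_sa contains a non-empty open subset of A^l_sa, then for every k ≥ 1 the set Gen_k(A)_sa is open (possibly empty) in A^k_sa. -/
open NonUnitalStarAlgebra in
lemma poly_cont {A : Type*} [NonUnitalCStarAlgebra A] {k : ℕ} (a : Fin k → A) (x : A)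
    (hx : x ∈ adjoin ℂ (Set.range a)) :
    ∃ f : (Fin k → A) → A, Continuous f ∧ f a = x ∧
      ∀ a', f a' ∈ adjoin ℂ (Set.range a') := by
  induction hx using adjoin_induction with
  | mem y hy =>
      obtain ⟨i, rfl⟩ := hy
      exact ⟨fun a' => a' i, continuous_apply i, rfl, fun a' => subset_adjoin ℂ _ ⟨i, rfl⟩⟩
  | add x y hx hy ihx ihy =>
      obtain ⟨f, hf, hfa, hfm⟩ := ihx
      obtain ⟨g, hg, hga, hgm⟩ := ihy
      exact ⟨f + g, hf.add hg, by simp [hfa, hga], fun a' => add_mem (hfm a') (hgm a')⟩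
  | zero => exact ⟨0, continuous_const, rfl, fun a' => zero_mem _⟩
  | mul x y hx hy ihx ihy =>
      obtain ⟨f, hf, hfa, hfm⟩ := ihx
      obtain ⟨g, hg, hga, hgm⟩ := ihy
      exact ⟨f * g, hf.mul hg, by simp [hfa, hga], fun a' => mul_mem (hfm a') (hgm a')⟩
  | smul r x hx ihx =>
      obtain ⟨f, hf, hfa, hfm⟩ := ihx
      exact ⟨r • f, hf.const_smul r, by simp [hfa], fun a' => SMulMemClass.smul_mem r (hfm a')⟩
  | star x hx ihx =>
      obtain ⟨f, hf, hfa, hfm⟩ := ihx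
      exact ⟨fun a' => star (f a'), hf.star, by simp [hfa], fun a' => star_mem (hfm a')⟩


/-- If for some `l ≥ 1` the set `Gen_l(A)_sa` contains a non-empty open subset
of `A^l_sa`, then for every `k ≥ 1` the set `Gen_k(A)_sa` is open (possibly empty) in
`A^k_sa`. -/
theorem gen_isOpen_of_exists_open_subset {A : Type*} [NonUnitalCStarAlgebra A]
    {l : ℕ} (hl : 1 ≤ l)
    (h : ∃ U : Set {x : Fin l → A // ∀ i, IsSelfAdjoint (x i)},
      IsOpen U ∧ U.Nonempty ∧ ∀ a ∈ U, Generates a.1) :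
    ∀ k : ℕ, 1 ≤ k →
      IsOpen {a : {x : Fin k → A // ∀ i, IsSelfAdjoint (x i)} | Generates a.1} := by
  obtain ⟨U, hUopen, ⟨b, hbU⟩, hUgen⟩ := h
  intro k hk
  obtain ⟨ε, hε, hball⟩ := Metric.isOpen_iff.mp hUopen b hbU
  rw [isOpen_iff_forall_mem_open]
  intro a ha
  -- each b i is in the closure of the adjoin of range a
  have hmem : ∀ i, b.1 i ∈ closure ((NonUnitalStarAlgebra.adjoin ℂ (Set.range a.1) :
      NonUnitalStarSubalgebra ℂ A) : Set A) := by
    intro i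
    have := ha
    simp only [Set.mem_setOf_eq, Generates] at this
    have : b.1 i ∈ (NonUnitalStarAlgebra.adjoin ℂ (Set.range a.1)).topologicalClosure := by
      rw [this]; trivial
    exact this
  -- choose approximants and continuous self-adjoint-valued functions
  have key : ∀ i : Fin l, ∃ g : (Fin k → A) → A, Continuous g ∧
      (∀ a', g a' ∈ NonUnitalStarAlgebra.adjoin ℂ (Set.range a')) ∧
      (∀ a', IsSelfAdjoint (g a')) ∧ ‖g a.1 - b.1 i‖ < ε := by
    intro i
    obtain ⟨x, hxmem, hxd⟩ := Metric.mem_closure_iff.mp (hmem i) ε hε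
    rw [dist_eq_norm, norm_sub_rev] at hxd
    obtain ⟨f, hfc, hfa, hfm⟩ := poly_cont a.1 x hxmem
    refine ⟨fun a' => (2⁻¹ : ℂ) • (f a' + star (f a')), by fun_prop, ?_, ?_, ?_⟩
    · exact fun a' => SMulMemClass.smul_mem _ (add_mem (hfm a') (star_mem (hfm a')))
    · intro a'
      rw [IsSelfAdjoint, star_smul, star_add, star_star, add_comm]
      norm_num
    · have hb : star (b.1 i) = b.1 i := b.2 i
      have h1 : ‖star x - b.1 i‖ = ‖x - b.1 i‖ := by
        rw [← hb, ← star_sub, norm_star, hb]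
      have : (2⁻¹ : ℂ) • (f a.1 + star (f a.1)) - b.1 i
          = (2⁻¹ : ℂ) • ((x - b.1 i) + (star x - b.1 i)) := by
        rw [hfa]
        module
      rw [this]
      calc ‖(2⁻¹ : ℂ) • ((x - b.1 i) + (star x - b.1 i))‖
          ≤ ‖(2⁻¹ : ℂ)‖ * (‖x - b.1 i‖ + ‖star x - b.1 i‖) := by
            rw [norm_smul]
            gcongr
            exact norm_add_le _ _
        _ < ε := by
            rw [h1]
            simp only [norm_inv]
            rw [← two_mul]
            have : ‖(2 : ℂ)‖ = 2 := by simp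
            rw [this]
            have h2 : (2:ℝ)⁻¹ * (2 * ‖x - b.1 i‖) = ‖x - b.1 i‖ := by ring
            linarith [hxd]
  choose g hgc hgm hgsa hgd using key
  -- the continuous map into l-tuples of self-adjoints
  set G : {x : Fin k → A // ∀ i, IsSelfAdjoint (x i)} →
      {x : Fin l → A // ∀ i, IsSelfAdjoint (x i)} :=
    fun a' => ⟨fun i => g i a'.1, fun i => hgsa i a'.1⟩ with hG
  have hGc : Continuous G := by
    apply Continuous.subtype_mk
    exact continuous_pi fun i => (hgc i).comp continuous_subtype_val
  have hGa : G a ∈ U := by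
    apply hball
    rw [Metric.mem_ball, Subtype.dist_eq]
    rw [dist_pi_lt_iff hε]
    intro i
    rw [dist_eq_norm]
    exact hgd i
  refine ⟨G ⁻¹' U, ?_, hUopen.preimage hGc, hGa⟩
  intro a' ha'
  have hgen := hUgen (G a') ha'
  simp only [Set.mem_setOf_eq, Generates] at hgen ⊢
  have hle : NonUnitalStarAlgebra.adjoin ℂ (Set.range (G a').1) ≤
      NonUnitalStarAlgebra.adjoin ℂ (Set.range a'.1) := by
    apply NonUnitalStarAlgebra.adjoin_le
    rintro _ ⟨i, rfl⟩
    exact hgm i a'.1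
  rw [eq_top_iff, ← hgen]
  intro x hx
  exact closure_mono hle hx
end

section
/- Let n ≥ 2 and let M_n denote the C*-algebra of n×n complex matrices. Let a ∈ M_n be a diagonal matrix with pairwise distinct non-zero real diagonal entries, and let b ∈ M_n be a self-adjoint matrix whose superdiagonal entries b_{i,i+1} are non-zero for i = 1,…,n−1. Then the pair (a, b) generates M_n as a C*-algebra; that is, the smallest closed *-subalgebra of M_n containing a and b is M_n itself. -/
/-!
A polynomial in `a` without constant term stays in the non-unital algebra generated by `a`
and `b`; since the `d i` are distinct and non-zero, `X * ∏_{j ≠ i} (X - d j)` is such a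
polynomial, and at `a` it is a non-zero multiple of the diagonal matrix unit `E_ii`.
Compressing `b` gives `E_ii * b * E_jj = b_ij E_ij`, so the superdiagonal units `E_i,i+1` lie
in the algebra, their products give all `E_ij` with `i < j`, and adjoints give those with
`i > j`. The algebra is thus all of `M_n` before taking the closure.
-/

open Matrix Polynomial

theorem Polynomial.aeval_mem_of_coeff_zero_eq_zero {R A σ : Type*} [CommSemiring R] [Semiring A]
    [Algebra R A] [SetLike σ A] [NonUnitalSubsemiringClass σ A] [SMulMemClass σ R A] {S : σ}
    {x : A} (hx : x ∈ S) {p : R[X]} (hp : p.coeff 0 = 0) : aeval x p ∈ S := by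
  have hpow (k : ℕ) : x ^ (k + 1) ∈ S := by
    induction k with
    | zero => simpa using hx
    | succ k ih => rw [pow_succ]; exact mul_mem ih hx
  rw [aeval_eq_sum_range]
  refine sum_mem fun k _ => ?_
  rcases k with _ | k
  · simp [hp]
  · exact SMulMemClass.smul_mem _ (hpow k)

namespace Matrix

variable {ι R σ : Type*} [Fintype ι] [DecidableEq ι]

theorem aeval_diagonal [CommSemiring R] (d : ι → R) (p : R[X]) :
    aeval (diagonal d) p = diagonal fun i => p.eval (d i) := by
  rw [← diagonalAlgHom_apply R, aeval_algHom_apply, aeval_pi_apply, diagonalAlgHom_apply]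
  simp only [coe_aeval_eq_eval]

theorem single_one_mem_of_diagonal_mem [Field R] [SetLike σ (Matrix ι ι R)]
    [NonUnitalSubsemiringClass σ (Matrix ι ι R)] [SMulMemClass σ R (Matrix ι ι R)] {S : σ}
    {d : ι → R} (hd : Function.Injective d) (hd0 : ∀ i, d i ≠ 0) (hS : diagonal d ∈ S)
    (i : ι) : single i i (1 : R) ∈ S := by
  set q : R[X] := X * ∏ j ∈ Finset.univ.erase i, (X - C (d j))
  have hq0 : q.coeff 0 = 0 := by simp [q, mul_coeff_zero]
  have hqi : q.eval (d i) ≠ 0 := by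
    simp only [q, eval_mul, eval_X, eval_prod, eval_sub, eval_C]
    refine mul_ne_zero (hd0 i) (Finset.prod_ne_zero_iff.2 fun j hj => sub_ne_zero.2 ?_)
    exact hd.ne (Finset.ne_of_mem_erase hj).symm
  have hq : aeval (diagonal d) q = single i i (q.eval (d i)) := by
    rw [aeval_diagonal, ← diagonal_single]
    congr 1
    funext k
    rcases eq_or_ne k i with rfl | hk
    · simp
    · rw [Pi.single_eq_of_ne hk]
      simp only [q, eval_mul, eval_prod, eval_sub, eval_C, eval_X]
      exact mul_eq_zero_of_right _
        (Finset.prod_eq_zero (Finset.mem_erase.2 ⟨hk, Finset.mem_univ k⟩) (sub_self _))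
  have := SMulMemClass.smul_mem (q.eval (d i))⁻¹ (aeval_mem_of_coeff_zero_eq_zero hS hq0)
  rwa [hq, smul_single, smul_eq_mul, inv_mul_cancel₀ hqi] at this

theorem single_apply_mem [Semiring R] [SetLike σ (Matrix ι ι R)]
    [MulMemClass σ (Matrix ι ι R)] {S : σ} {b : Matrix ι ι R} (hb : b ∈ S) {i j : ι}
    (hi : single i i 1 ∈ S) (hj : single j j 1 ∈ S) : single i j (b i j) ∈ S := by
  simpa using mul_mem (mul_mem hi hb) hj

theorem single_one_mem_of_lt_of_superdiagonal {n : ℕ} [Semiring R]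
    [SetLike σ (Matrix (Fin n) (Fin n) R)] [MulMemClass σ (Matrix (Fin n) (Fin n) R)] {S : σ}
    (hS : ∀ (i : ℕ) (h : i + 1 < n),
      single ⟨i, Nat.lt_of_succ_lt h⟩ ⟨i + 1, h⟩ (1 : R) ∈ S)
    {i j : Fin n} (hij : i < j) : single i j (1 : R) ∈ S := by
  obtain ⟨j, hj⟩ := j
  induction j with
  | zero => exact absurd hij (Nat.not_lt_zero _)
  | succ j ih =>
    have hj' : j < n := Nat.lt_of_succ_lt hj
    rcases Nat.lt_succ_iff_lt_or_eq.1 (Fin.lt_def.1 hij) with hij | hij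
    · simpa using mul_mem (ih hj' hij) (hS j hj)
    · obtain rfl : i = ⟨j, hj'⟩ := Fin.ext hij
      exact hS j hj

theorem mem_of_forall_single_one_mem [Semiring R] [SetLike σ (Matrix ι ι R)]
    [AddSubmonoidClass σ (Matrix ι ι R)] [SMulMemClass σ R (Matrix ι ι R)] {S : σ}
    (hS : ∀ i j, single i j (1 : R) ∈ S) (x : Matrix ι ι R) : x ∈ S := by
  rw [matrix_eq_sum_single x]
  refine sum_mem fun i _ => sum_mem fun j _ => ?_
  simpa using SMulMemClass.smul_mem (x i j) (hS i j)

end Matrix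

theorem diagonal_and_offdiagonal_generate_general {n : ℕ}
    (d : Fin n → ℝ) (hd_inj : Function.Injective d) (hd_ne : ∀ i, d i ≠ 0)
    (a b : Matrix (Fin n) (Fin n) ℂ)
    (ha : a = Matrix.diagonal fun i => (d i : ℂ))
    (hb_ne : ∀ (i : ℕ) (h : i + 1 < n), b ⟨i, Nat.lt_of_succ_lt h⟩ ⟨i + 1, h⟩ ≠ 0) :
    (NonUnitalStarAlgebra.adjoin ℂ {a, b}).topologicalClosure = ⊤ := by
  set S := NonUnitalStarAlgebra.adjoin ℂ {a, b}
  have haS : a ∈ S := NonUnitalStarAlgebra.subset_adjoin ℂ _ (by simp)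
  have hbS : b ∈ S := NonUnitalStarAlgebra.subset_adjoin ℂ _ (by simp)
  have hdiag (i : Fin n) : single i i (1 : ℂ) ∈ S :=
    single_one_mem_of_diagonal_mem (Complex.ofReal_injective.comp hd_inj)
      (fun i => Complex.ofReal_ne_zero.2 (hd_ne i)) (ha ▸ haS) i
  have hsuper (i : ℕ) (h : i + 1 < n) :
      single ⟨i, Nat.lt_of_succ_lt h⟩ ⟨i + 1, h⟩ (1 : ℂ) ∈ S := by
    have := SMulMemClass.smul_mem (b ⟨i, Nat.lt_of_succ_lt h⟩ ⟨i + 1, h⟩)⁻¹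
      (single_apply_mem hbS (hdiag ⟨i, Nat.lt_of_succ_lt h⟩) (hdiag ⟨i + 1, h⟩))
    rwa [smul_single, smul_eq_mul, inv_mul_cancel₀ (hb_ne i h)] at this
  have hunits (i j : Fin n) : single i j (1 : ℂ) ∈ S := by
    rcases lt_trichotomy i j with hij | rfl | hij
    · exact single_one_mem_of_lt_of_superdiagonal hsuper hij
    · exact hdiag i
    · simpa [star_eq_conjTranspose] using
        star_mem (single_one_mem_of_lt_of_superdiagonal hsuper hij)
  exact eq_top_iff.2 fun x _ => S.le_topologicalClosure (mem_of_forall_single_one_mem hunits x)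

/-- Let `n ≥ 2`, let `a ∈ M_n` be a diagonal matrix with pairwise distinct
non-zero real diagonal entries, and let `b ∈ M_n` be self-adjoint with non-zero
superdiagonal entries `b_{i,i+1}` for `i = 1, …, n−1`.  Then the pair `(a, b)` generates
`M_n` as a C*-algebra: the smallest closed `*`-subalgebra of `M_n` containing `a` and `b` is
`M_n` itself. -/
theorem diagonal_and_offdiagonal_generate {n : ℕ} (hn : 2 ≤ n)
    (d : Fin n → ℝ) (hd_inj : Function.Injective d) (hd_ne : ∀ i, d i ≠ 0)
    (a b : Matrix (Fin n) (Fin n) ℂ)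
    (ha : a = Matrix.diagonal fun i => (d i : ℂ))
    (hb : IsSelfAdjoint b)
    (hb_ne : ∀ (i : ℕ) (h : i + 1 < n), b ⟨i, Nat.lt_of_succ_lt h⟩ ⟨i + 1, h⟩ ≠ 0) :
    (NonUnitalStarAlgebra.adjoin ℂ {a, b}).topologicalClosure = ⊤ :=
  diagonal_and_offdiagonal_generate_general d hd_inj hd_ne a b ha hb_ne
end
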